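/- arXiv:2603.21345 — 4 statements merged into one kernel-verified Lean document; each statement's English description precedes it below -/
import Mathlib

section
/- Assume 𝓜_N and all 𝓜_{N,(b,0)} (1 ≤ b ≤ q), 𝓜_{N,(0,a)} (1 ≤ a ≤ p) admit Gauss–Borel factorizations with lower unitriangular factors. Writing L_{a,n} := (L_a)_{n,n−1} and U_{b,n} := (U_b)_{n,n}, the entries of the bidiagonal factors satisfy: for a ∈ {1,…,p} and n ∈ {1,…,N−1}, L_{a,n} = (𝓛_{N,(0,a−1)})_{n,n−1} − (𝓛_{N,(0,a)})_{n,n−1}; and for b ∈ {1,…,q} and n ∈ {0,…,N−1}, U_{b,n} = (𝓤_{N,(b−1,0)})_{n,n} / (𝓤_{N,(b,0)})_{n,n}. -/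
open Matrix MeasureTheory

noncomputable section

section Helpers
variable {N : ℕ}

/-- an upper triangular matrix is BlockTriangular id -/
lemma upperBT (M : Matrix (Fin N) (Fin N) ℝ) (h : ∀ i j : Fin N, j < i → M i j = 0) :
    M.BlockTriangular id := fun i j hij => h i j hij

lemma lowerBT (M : Matrix (Fin N) (Fin N) ℝ) (h : ∀ i j : Fin N, i < j → M i j = 0) :
    M.BlockTriangular OrderDual.toDual := fun i j hij => h i j hij

/-- inverse of invertible upper triangular is upper triangular, and its diagonal entries. -/
lemma upper_inv (M : Matrix (Fin N) (Fin N) ℝ) (h : ∀ i j : Fin N, j < i → M i j = 0)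
    (hdet : IsUnit M.det) :
    (∀ i j : Fin N, j < i → M⁻¹ i j = 0) ∧ (∀ i : Fin N, M⁻¹ i i * M i i = 1) := by
  have : Invertible M := M.invertibleOfIsUnitDet hdet
  have hBT := Matrix.blockTriangular_inv_of_blockTriangular (upperBT M h)
  refine ⟨fun i j hij => hBT hij, fun i => ?_⟩
  have h1 : (M⁻¹ * M) i i = 1 := by rw [Matrix.nonsing_inv_mul M hdet]; simp
  rw [Matrix.mul_apply] at h1
  rw [← h1]
  refine (Finset.sum_eq_single (f := fun k => M⁻¹ i k * M k i) i (fun k _ hk => ?_) (fun hni => absurd (Finset.mem_univ i) hni)).symm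
  show M⁻¹ i k * M k i = 0
  rcases lt_or_gt_of_ne hk with hlt | hgt
  · rw [hBT (show (id k : Fin N) < id i from hlt), zero_mul]
  · rw [h k i hgt, mul_zero]

lemma lower_unit_inv (M : Matrix (Fin N) (Fin N) ℝ) (h : ∀ i j : Fin N, i < j → M i j = 0)
    (hd : ∀ i : Fin N, M i i = 1) :
    (∀ i j : Fin N, i < j → M⁻¹ i j = 0) ∧ (∀ i : Fin N, M⁻¹ i i = 1) ∧
    (∀ i j : Fin N, (j : ℕ) + 1 = (i : ℕ) → M⁻¹ i j = - M i j) := by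
  have hdet : IsUnit M.det := by
    rw [Matrix.det_of_lowerTriangular M (lowerBT M h)]
    simp [hd]
  have : Invertible M := M.invertibleOfIsUnitDet hdet
  have hBT := Matrix.blockTriangular_inv_of_blockTriangular (lowerBT M h)
  have hinv : ∀ i j : Fin N, i < j → M⁻¹ i j = 0 := fun i j hij => hBT hij
  have hdiag : ∀ i : Fin N, M⁻¹ i i = 1 := by
    intro i
    have h1 : (M⁻¹ * M) i i = 1 := by rw [Matrix.nonsing_inv_mul M hdet]; simp
    rw [Matrix.mul_apply] at h1
    have h2 : ∑ k, M⁻¹ i k * M k i = M⁻¹ i i := by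
      refine Finset.sum_eq_single i (fun k _ hk => ?_) (fun hni => absurd (Finset.mem_univ i) hni) |>.trans (by rw [hd i, mul_one])
      rcases lt_or_gt_of_ne hk with hlt | hgt
      · rw [h k i hlt, mul_zero]
      · rw [hinv i k hgt, zero_mul]
    rw [h2] at h1; exact h1
  refine ⟨hinv, hdiag, fun i j hij => ?_⟩
  have hji : j < i := by
    rw [Fin.lt_def]; omega
  have h1 : (M⁻¹ * M) i j = 0 := by
    rw [Matrix.nonsing_inv_mul M hdet]
    exact Matrix.one_apply_ne (Fin.ne_of_gt hji)
  rw [Matrix.mul_apply] at h1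
  have hsub : ({j, i} : Finset (Fin N)) ⊆ Finset.univ := Finset.subset_univ _
  have h2 : ∑ k, M⁻¹ i k * M k j = ∑ k ∈ ({j, i} : Finset (Fin N)), M⁻¹ i k * M k j := by
    refine (Finset.sum_subset hsub (fun k _ hk => ?_)).symm
    simp only [Finset.mem_insert, Finset.mem_singleton, not_or] at hk
    obtain ⟨hkj, hki⟩ := hk
    rcases lt_or_gt_of_ne hki with hlt | hgt
    · -- k < i ; since k ≠ j and (j:ℕ)+1 = i, k < j
      have : k < j := by rw [Fin.lt_def] at *; have := Fin.val_ne_of_ne hkj; omega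
      rw [h k j this, mul_zero]
    · rw [hinv i k hgt, zero_mul]
  rw [h2, Finset.sum_pair (Fin.ne_of_lt hji)] at h1
  rw [hd j, hdiag i] at h1
  linarith
end Helpers

/-- Monomial matrix `X^{[M]}_{[r]}(x)`. -/
def Xmat (r M : ℕ) (x : ℝ) : Matrix (Fin M) (Fin r) ℝ :=
  Matrix.of fun i s => if (i : ℕ) % r = (s : ℕ) then x ^ ((i : ℕ) / r) else 0

/-- The matrix `𝔛_{[r,s]}(x)`. -/
def frakX (r s : ℕ) (x : ℝ) : Matrix (Fin r) (Fin r) ℝ :=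
  Matrix.of fun i j =>
    if (i : ℕ) < r - s ∧ (j : ℕ) = (i : ℕ) + s then 1
    else if r - s ≤ (i : ℕ) ∧ (i : ℕ) = (j : ℕ) + (r - s) then x
    else 0

/-- Christoffel-perturbed moment matrix `𝓜_{N,(n,m)}`. -/
def MomC (q p : ℕ) (μ : Fin q → Fin p → Measure ℝ)
    (N n m : ℕ) : Matrix (Fin N) (Fin N) ℝ :=
  Matrix.of fun i j =>
    ∑ a : Fin q, ∑ b : Fin p,
      ∫ x : ℝ, (Xmat q N x * frakX q 1 x ^ n) i a *
        (Xmat p N x * frakX p 1 x ^ m) j b ∂ μ a b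

/-- Entries of the bidiagonal factors, first form:
`L_{a,n} = (𝓛_{N,(0,a−1)})_{n,n−1} − (𝓛_{N,(0,a)})_{n,n−1}` and
`U_{b,n} = (𝓤_{N,(b−1,0)})_{n,n} / (𝓤_{N,(b,0)})_{n,n}`. -/
theorem bidiagonal_entries_first_form (p q N : ℕ) (hp : 0 < p) (hq : 0 < q)
    (μ : Fin q → Fin p → Measure ℝ)
    (hμ : ∀ (a : Fin q) (b : Fin p) (k : ℕ),
      Integrable (fun x : ℝ => |x| ^ k) (μ a b))
    (L U : ℕ → ℕ → Matrix (Fin N) (Fin N) ℝ)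
    (hfact : ∀ n m : ℕ, (n ≤ q ∧ m = 0) ∨ (n = 0 ∧ m ≤ p) →
      (∀ i j : Fin N, i < j → L n m i j = 0) ∧
      (∀ i : Fin N, L n m i i = 1) ∧
      (∀ i j : Fin N, j < i → U n m i j = 0) ∧
      IsUnit (U n m).det ∧
      MomC q p μ N n m = (L n m)⁻¹ * (U n m)⁻¹) :
    (∀ a : ℕ, 1 ≤ a → a ≤ p → ∀ n : ℕ, 1 ≤ n → (hn : n < N) →
      (L 0 (a - 1) * (L 0 a)⁻¹) ⟨n, hn⟩ ⟨n - 1, by omega⟩ =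
        L 0 (a - 1) ⟨n, hn⟩ ⟨n - 1, by omega⟩ -
          L 0 a ⟨n, hn⟩ ⟨n - 1, by omega⟩) ∧
    (∀ b : ℕ, 1 ≤ b → b ≤ q → ∀ n : ℕ, (hn : n < N) →
      ((U b 0)⁻¹ * U (b - 1) 0) ⟨n, hn⟩ ⟨n, hn⟩ =
        U (b - 1) 0 ⟨n, hn⟩ ⟨n, hn⟩ / U b 0 ⟨n, hn⟩ ⟨n, hn⟩) := by
  constructor
  · intro a ha1 hap n hn1 hn
    set i : Fin N := ⟨n, hn⟩
    set j : Fin N := ⟨n - 1, by omega⟩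
    have hji : (j : ℕ) + 1 = (i : ℕ) := by simp [i, j]; omega
    obtain ⟨hA₀, hA₁, -⟩ := hfact 0 (a - 1) (Or.inr ⟨rfl, by omega⟩)
    obtain ⟨hB₀, hB₁, -⟩ := hfact 0 a (Or.inr ⟨rfl, hap⟩)
    obtain ⟨hBi₀, hBi₁, hBisub⟩ := lower_unit_inv (L 0 a) hB₀ hB₁
    have hjlt : j < i := by rw [Fin.lt_def]; omega
    rw [Matrix.mul_apply]
    have h2 : ∑ k, L 0 (a-1) i k * (L 0 a)⁻¹ k j
        = ∑ k ∈ ({j, i} : Finset (Fin N)), L 0 (a-1) i k * (L 0 a)⁻¹ k j := by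
      refine (Finset.sum_subset (Finset.subset_univ _) (fun k _ hk => ?_)).symm
      simp only [Finset.mem_insert, Finset.mem_singleton, not_or] at hk
      obtain ⟨hkj, hki⟩ := hk
      rcases lt_or_gt_of_ne hki with hlt | hgt
      · have : k < j := by
          rw [Fin.lt_def] at *; have := Fin.val_ne_of_ne hkj; omega
        rw [hBi₀ k j this, mul_zero]
      · rw [hA₀ i k hgt, zero_mul]
    rw [h2, Finset.sum_pair (Fin.ne_of_lt hjlt), hBi₁ j, hA₁ i,
      hBisub i j hji]
    ring
  · intro b hb1 hbq n hn
    set i : Fin N := ⟨n, hn⟩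
    obtain ⟨-, -, hV₀, hVdet, -⟩ := hfact (b - 1) 0 (Or.inl ⟨by omega, rfl⟩)
    obtain ⟨-, -, hW₀, hWdet, -⟩ := hfact b 0 (Or.inl ⟨hbq, rfl⟩)
    obtain ⟨hWi₀, hWid⟩ := upper_inv (U b 0) hW₀ hWdet
    rw [Matrix.mul_apply]
    have h2 : ∑ k, (U b 0)⁻¹ i k * U (b-1) 0 k i = (U b 0)⁻¹ i i * U (b-1) 0 i i := by
      refine Finset.sum_eq_single (f := fun k => (U b 0)⁻¹ i k * U (b-1) 0 k i) i
        (fun k _ hk => ?_) (fun hni => absurd (Finset.mem_univ i) hni)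
      show (U b 0)⁻¹ i k * U (b-1) 0 k i = 0
      rcases lt_or_gt_of_ne hk with hlt | hgt
      · rw [hWi₀ i k hlt, zero_mul]
      · rw [hV₀ k i hgt, mul_zero]
    have hWne : U b 0 i i ≠ 0 := by
      intro h0
      have := hWid i
      rw [h0, mul_zero] at this
      simp at this
    rw [h2, eq_div_iff hWne, mul_right_comm, hWid i, one_mul]
end
end

section
/- Assume 𝓜_N and all 𝓜_{N,(b,0)} (1 ≤ b ≤ q), 𝓜_{N,(0,a)} (1 ≤ a ≤ p) admit Gauss–Borel factorizations with lower unitriangular factors. Writing L_{a,n} := (L_a)_{n,n−1} and U_{b,n} := (U_b)_{n,n}, the following alternative expressions hold: for a ∈ {1,…,p} and n ∈ {1,…,N−1}, L_{a,n} = (𝓤_{N,(0,a)})_{n−1,n−1} / (𝓤_{N,(0,a−1)})_{n,n}; and for b ∈ {1,…,q}, U_{b,0} = −(𝓛_{N,(b−1,0)})_{1,0}, while for n ∈ {1,…,N−2}, U_{b,n} = (𝓛_{N,(b,0)})_{n,n−1} − (𝓛_{N,(b−1,0)})_{n+1,n}. -/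
open Matrix MeasureTheory

noncomputable section

/-!
Right multiplication by `𝔛_{[r,1]}(x)` moves every row of the monomial matrix `X_{[r]}(x)` to
the next one, so `𝓜_{N,(n+1,m)}` is `𝓜_{N,(n,m)}` shifted up by one row and `𝓜_{N,(n,m+1)}` is
`𝓜_{N,(n,m)}` shifted left by one column. Now `U_b = 𝓛_{N,(b,0)} 𝓜_{N,(b,0)} 𝓤_{N,(b−1,0)}` and
`L_a = 𝓛_{N,(0,a−1)} 𝓜_{N,(0,a)} 𝓤_{N,(0,a)}`; by the shift, `𝓜_{N,(b,0)} 𝓤_{N,(b−1,0)}` has the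
rows of `𝓛_{N,(b−1,0)}⁻¹` moved up by one and `𝓛_{N,(0,a−1)} 𝓜_{N,(0,a)}` has the columns of
`𝓤_{N,(0,a−1)}⁻¹` moved left by one. By triangularity at most two terms of each matrix product
survive, and the subdiagonal of the inverse of a unitriangular matrix is minus its own.
-/

section

variable {R K m α : Type*} [CommRing R] [Field K] {N : ℕ}

namespace Matrix

theorem IsLowerTriangular.det_eq_one [Fintype m] [LinearOrder m] {L : Matrix m m R}
    (hL : L.IsLowerTriangular) (hdiag : ∀ i, L i i = 1) : L.det = 1 := by
  rw [det_of_isLowerTriangular L hL]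
  simp [hdiag]

section BlockTriangular

variable [Fintype m] [DecidableEq m] [LinearOrder α]

theorem BlockTriangular.inv {M : Matrix m m R} {b : m → α} (hM : M.BlockTriangular b) :
    M⁻¹.BlockTriangular b := by
  by_cases hdet : IsUnit M.det
  · have := M.invertibleOfIsUnitDet hdet
    exact blockTriangular_inv_of_blockTriangular hM
  · rw [nonsing_inv_apply_not_isUnit M hdet]
    exact blockTriangular_zero

theorem BlockTriangular.inv_apply_self {M : Matrix m m K} {b : m → α}
    (hM : M.BlockTriangular b) (hb : Function.Injective b) (hdet : IsUnit M.det) (i : m) :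
    M⁻¹ i i = (M i i)⁻¹ := by
  refine (inv_eq_of_mul_eq_one_right ?_).symm
  have h := congrFun₂ (mul_nonsing_inv M hdet) i i
  rwa [one_apply_eq, mul_apply, Fintype.sum_eq_single i fun k hk => ?_] at h
  rcases lt_or_gt_of_ne (hb.ne hk) with hlt | hlt
  · rw [hM hlt, zero_mul]
  · rw [hM.inv hlt, mul_zero]

end BlockTriangular

theorem IsLowerTriangular.inv_apply_succ_self {L : Matrix (Fin N) (Fin N) K}
    (hL : L.IsLowerTriangular) (hdiag : ∀ i, L i i = 1) (k : ℕ) (hk : k + 1 < N) :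
    L⁻¹ ⟨k + 1, hk⟩ ⟨k, by omega⟩ = -L ⟨k + 1, hk⟩ ⟨k, by omega⟩ := by
  have hdet : IsUnit L.det := by rw [hL.det_eq_one hdiag]; exact isUnit_one
  have hne : (⟨k, by omega⟩ : Fin N) ≠ ⟨k + 1, hk⟩ := by simp
  have h := congrFun₂ (nonsing_inv_mul L hdet) ⟨k + 1, hk⟩ ⟨k, by omega⟩
  rw [one_apply_ne hne.symm, mul_apply, Fintype.sum_eq_add _ _ hne fun l hl => ?_,
    hdiag, hL.inv_apply_self OrderDual.toDual.injective hdet, hdiag, inv_one] at h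
  · linear_combination h
  · rcases lt_or_gt_of_ne (Fin.val_ne_of_ne hl.1) with hlt | hlt
    · rw [hL hlt, mul_zero]
    · rw [hL.inv (show (⟨k + 1, hk⟩ : Fin N) < l by grind [Fin.lt_def]), zero_mul]

end Matrix

structure IsGaussBorelFactorization (M L U : Matrix (Fin N) (Fin N) K) : Prop where
  isLowerTriangular : L.IsLowerTriangular
  diag_eq_one : ∀ i, L i i = 1
  isUpperTriangular : U.IsUpperTriangular
  isUnit_det : IsUnit U.det
  eq_inv_mul_inv : M = L⁻¹ * U⁻¹

namespace IsGaussBorelFactorization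

variable {M L U M' L' U' : Matrix (Fin N) (Fin N) K}

theorem isUnit_det_lower (h : IsGaussBorelFactorization M L U) : IsUnit L.det := by
  rw [h.isLowerTriangular.det_eq_one h.diag_eq_one]
  exact isUnit_one

theorem lower_mul (h : IsGaussBorelFactorization M L U) : L * M = U⁻¹ := by
  rw [h.eq_inv_mul_inv, ← Matrix.mul_assoc, mul_nonsing_inv L h.isUnit_det_lower, Matrix.one_mul]

theorem mul_upper (h : IsGaussBorelFactorization M L U) : M * U = L⁻¹ := by
  rw [h.eq_inv_mul_inv, Matrix.mul_assoc, nonsing_inv_mul U h.isUnit_det, Matrix.mul_one]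

theorem lower_mul_apply_of_col_eq (h' : IsGaussBorelFactorization M' L' U') (i j : Fin N)
    {j' : Fin N} (hcol : ∀ k, M k j = M' k j') : (L' * M) i j = U'⁻¹ i j' := by
  simp only [mul_apply, hcol]
  rw [← mul_apply, h'.lower_mul]

theorem mul_upper_apply_of_row_eq (h' : IsGaussBorelFactorization M' L' U') (i j : Fin N)
    {i' : Fin N} (hrow : ∀ k, M i k = M' i' k) : (M * U') i j = L'⁻¹ i' j := by
  simp only [mul_apply, hrow]
  rw [← mul_apply, h'.mul_upper]

theorem lower_mul_inv_lower_apply_succ_self (h : IsGaussBorelFactorization M L U)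
    (h' : IsGaussBorelFactorization M' L' U')
    (hshift : ∀ (i j : Fin N) (hj : (j : ℕ) + 1 < N), M i j = M' i ⟨j + 1, hj⟩)
    (n : ℕ) (hn : n + 1 < N) :
    (L' * L⁻¹) ⟨n + 1, hn⟩ ⟨n, by omega⟩ =
      U ⟨n, by omega⟩ ⟨n, by omega⟩ / U' ⟨n + 1, hn⟩ ⟨n + 1, hn⟩ := by
  have hL'M (j : Fin N) (hj : (j : ℕ) + 1 < N) :=
    h'.lower_mul_apply_of_col_eq ⟨n + 1, hn⟩ j fun k => hshift k j hj
  rw [← h.mul_upper, ← Matrix.mul_assoc, mul_apply,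
    Fintype.sum_eq_single ⟨n, by omega⟩ fun k hk => ?_, hL'M _ hn,
    h'.isUpperTriangular.inv_apply_self Function.injective_id h'.isUnit_det, inv_mul_eq_div]
  rcases lt_or_gt_of_ne (Fin.val_ne_of_ne hk) with hlt | hlt
  · rw [hL'M _ (by omega), h'.isUpperTriangular.inv (by grind [Fin.lt_def] : _ < _), zero_mul]
  · rw [h.isUpperTriangular hlt, mul_zero]

theorem inv_upper_mul_upper_eq (h : IsGaussBorelFactorization M L U) :
    U⁻¹ * U' = L * (M * U') := by
  rw [← h.lower_mul, Matrix.mul_assoc]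

theorem inv_upper_mul_upper_apply_zero_zero (h : IsGaussBorelFactorization M L U)
    (h' : IsGaussBorelFactorization M' L' U')
    (hshift : ∀ (i j : Fin N) (hi : (i : ℕ) + 1 < N), M i j = M' ⟨i + 1, hi⟩ j)
    (hN : 1 < N) :
    (U⁻¹ * U') ⟨0, Nat.zero_lt_of_lt hN⟩ ⟨0, Nat.zero_lt_of_lt hN⟩ =
      -L' ⟨1, hN⟩ ⟨0, Nat.zero_lt_of_lt hN⟩ := by
  have hMU' := h'.mul_upper_apply_of_row_eq ⟨0, by omega⟩ ⟨0, by omega⟩ (i' := ⟨1, hN⟩)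
    (hshift _ · hN)
  rw [h.inv_upper_mul_upper_eq, mul_apply, Fintype.sum_eq_single ⟨0, by omega⟩ fun k hk => ?_,
    h.diag_eq_one, one_mul, hMU', h'.isLowerTriangular.inv_apply_succ_self h'.diag_eq_one 0 hN]
  rw [h.isLowerTriangular (by simp [Fin.lt_def, Fin.ext_iff] at hk ⊢; omega), zero_mul]

theorem inv_upper_mul_upper_apply_succ_succ (h : IsGaussBorelFactorization M L U)
    (h' : IsGaussBorelFactorization M' L' U')
    (hshift : ∀ (i j : Fin N) (hi : (i : ℕ) + 1 < N), M i j = M' ⟨i + 1, hi⟩ j)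
    (n : ℕ) (hn : n + 2 < N) :
    (U⁻¹ * U') ⟨n + 1, by omega⟩ ⟨n + 1, by omega⟩ =
      L ⟨n + 1, by omega⟩ ⟨n, by omega⟩ - L' ⟨n + 2, hn⟩ ⟨n + 1, by omega⟩ := by
  have hMU' (i : ℕ) (hi : i + 1 < N) :=
    h'.mul_upper_apply_of_row_eq ⟨i, by omega⟩ ⟨n + 1, by omega⟩ (i' := ⟨i + 1, hi⟩)
      (hshift _ · hi)
  have hL'inv : L'⁻¹ ⟨n + 1, by omega⟩ ⟨n + 1, by omega⟩ = 1 := by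
    rw [h'.isLowerTriangular.inv_apply_self OrderDual.toDual.injective h'.isUnit_det_lower,
      h'.diag_eq_one, inv_one]
  rw [h.inv_upper_mul_upper_eq, mul_apply,
    Fintype.sum_eq_add ⟨n, by omega⟩ ⟨n + 1, by omega⟩ (Fin.ne_of_val_ne n.succ_ne_self.symm)
      fun k hk => ?_,
    hMU' n (by omega), hMU' (n + 1) hn, hL'inv, h.diag_eq_one,
    h'.isLowerTriangular.inv_apply_succ_self h'.diag_eq_one (n + 1) hn]
  · ring
  rcases lt_or_gt_of_ne (Fin.val_ne_of_ne hk.1) with hlt | hlt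
  · rw [hMU' k (by omega), h'.isLowerTriangular.inv (by simp [Fin.lt_def] at hlt ⊢; omega),
      mul_zero]
  · rw [h.isLowerTriangular (by simp [Fin.lt_def, Fin.ext_iff] at hk hlt ⊢; omega), zero_mul]

end IsGaussBorelFactorization

end

/-- Row `k` of the monomial matrix `X^{[M]}_{[r]}(x)`, for any `M > k`. -/
def monomialRow (r : ℕ) (x : ℝ) (k : ℕ) (a : Fin r) : ℝ :=
  if k % r = a then x ^ (k / r) else 0

theorem monomialRow_mul_add {r s : ℕ} (x : ℝ) (q : ℕ) (hs : s < r) (a : Fin r) :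
    monomialRow r x (r * q + s) a = if s = a then x ^ q else 0 := by
  rw [monomialRow, Nat.mul_add_mod, Nat.mod_eq_of_lt hs, Nat.mul_add_div (by omega),
    Nat.div_eq_of_lt hs, add_zero]

theorem monomialRow_vecMul_frakX (r : ℕ) (x : ℝ) (k : ℕ) :
    monomialRow r x k ᵥ* frakX r 1 x = monomialRow r x (k + 1) := by
  funext a
  obtain ⟨q, s, hs, rfl⟩ : ∃ q s, s < r ∧ k = r * q + s :=
    ⟨k / r, k % r, Nat.mod_lt k a.pos, (Nat.div_add_mod k r).symm⟩
  rw [vecMul, dotProduct, Fintype.sum_eq_single ⟨s, hs⟩ fun t ht => by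
    simp [monomialRow_mul_add x q hs, Ne.symm (Fin.val_ne_of_ne ht)], monomialRow_mul_add x q hs]
  rcases Nat.lt_or_ge (s + 1) r with hlt | hge
  · rw [add_assoc, monomialRow_mul_add x q hlt]
    simp only [frakX, of_apply]
    split_ifs <;> first | omega | simp
  · rw [show r * q + s + 1 = r * (q + 1) + 0 by rw [mul_add]; omega,
      monomialRow_mul_add x (q + 1) a.pos]
    simp only [frakX, of_apply]
    split_ifs <;> first | omega | simp [pow_succ]

theorem Xmat_mul_frakX_pow_row (r M : ℕ) (x : ℝ) (n : ℕ) (i : Fin M) :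
    (Xmat r M x * frakX r 1 x ^ n) i = monomialRow r x (i + n) := by
  induction n with
  | zero => rw [pow_zero, Matrix.mul_one]; rfl
  | succ n ih =>
    rw [pow_succ, ← Matrix.mul_assoc, mul_apply_eq_vecMul, ih, monomialRow_vecMul_frakX,
      add_assoc]

theorem MomC_succ_left_apply (q p : ℕ) (μ : Fin q → Fin p → Measure ℝ) (N n m : ℕ)
    (i j : Fin N) (hi : (i : ℕ) + 1 < N) :
    MomC q p μ N (n + 1) m i j = MomC q p μ N n m ⟨i + 1, hi⟩ j := by
  simp only [MomC, of_apply, Xmat_mul_frakX_pow_row, add_right_comm _ 1 n, add_assoc]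

theorem MomC_succ_right_apply (q p : ℕ) (μ : Fin q → Fin p → Measure ℝ) (N n m : ℕ)
    (i j : Fin N) (hj : (j : ℕ) + 1 < N) :
    MomC q p μ N n (m + 1) i j = MomC q p μ N n m i ⟨j + 1, hj⟩ := by
  simp only [MomC, of_apply, Xmat_mul_frakX_pow_row, add_right_comm _ 1 m, add_assoc]

/-- Entries of the bidiagonal factors, alternative form:
`L_{a,n} = (𝓤_{N,(0,a)})_{n−1,n−1} / (𝓤_{N,(0,a−1)})_{n,n}`,
`U_{b,0} = −(𝓛_{N,(b−1,0)})_{1,0}`, and for `1 ≤ n ≤ N−2`,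
`U_{b,n} = (𝓛_{N,(b,0)})_{n,n−1} − (𝓛_{N,(b−1,0)})_{n+1,n}`. -/
theorem bidiagonal_entries_alternative_form (p q N : ℕ)
    (μ : Fin q → Fin p → Measure ℝ)
    (L U : ℕ → ℕ → Matrix (Fin N) (Fin N) ℝ)
    (hfact : ∀ n m : ℕ, (n ≤ q ∧ m = 0) ∨ (n = 0 ∧ m ≤ p) →
      (∀ i j : Fin N, i < j → L n m i j = 0) ∧
      (∀ i : Fin N, L n m i i = 1) ∧
      (∀ i j : Fin N, j < i → U n m i j = 0) ∧
      IsUnit (U n m).det ∧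
      MomC q p μ N n m = (L n m)⁻¹ * (U n m)⁻¹) :
    (∀ a : ℕ, 1 ≤ a → a ≤ p → ∀ n : ℕ, 1 ≤ n → (hn : n < N) →
      (L 0 (a - 1) * (L 0 a)⁻¹) ⟨n, hn⟩ ⟨n - 1, by omega⟩ =
        U 0 a ⟨n - 1, by omega⟩ ⟨n - 1, by omega⟩ /
          U 0 (a - 1) ⟨n, hn⟩ ⟨n, hn⟩) ∧
    (∀ b : ℕ, 1 ≤ b → b ≤ q →
      (∀ hN : 1 < N,
        ((U b 0)⁻¹ * U (b - 1) 0) ⟨0, by omega⟩ ⟨0, by omega⟩ =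
          - L (b - 1) 0 ⟨1, hN⟩ ⟨0, by omega⟩) ∧
      (∀ (n : ℕ) (hn1 : 1 ≤ n) (hn2 : n + 2 ≤ N),
        ((U b 0)⁻¹ * U (b - 1) 0) ⟨n, by omega⟩ ⟨n, by omega⟩ =
          L b 0 ⟨n, by omega⟩ ⟨n - 1, by omega⟩ -
            L (b - 1) 0 ⟨n + 1, by omega⟩ ⟨n, by omega⟩)) := by
  have hGB (n m : ℕ) (hnm : (n ≤ q ∧ m = 0) ∨ (n = 0 ∧ m ≤ p)) :
      IsGaussBorelFactorization (MomC q p μ N n m) (L n m) (U n m) :=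
    let ⟨hL, hdiag, hU, hdet, hM⟩ := hfact n m hnm
    ⟨hL, hdiag, hU, hdet, hM⟩
  refine ⟨fun a ha1 ha n hn1 hn => ?_, fun b hb1 hb => ⟨fun hN => ?_, fun n hn1 hn => ?_⟩⟩
  · obtain ⟨a, rfl⟩ := Nat.exists_eq_add_of_le' ha1
    obtain ⟨n, rfl⟩ := Nat.exists_eq_add_of_le' hn1
    exact (hGB 0 (a + 1) (.inr ⟨rfl, ha⟩)).lower_mul_inv_lower_apply_succ_self
      (hGB 0 a (.inr ⟨rfl, by omega⟩)) (MomC_succ_right_apply q p μ N 0 a) n hn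
  · obtain ⟨b, rfl⟩ := Nat.exists_eq_add_of_le' hb1
    exact (hGB (b + 1) 0 (.inl ⟨hb, rfl⟩)).inv_upper_mul_upper_apply_zero_zero
      (hGB b 0 (.inl ⟨by omega, rfl⟩)) (MomC_succ_left_apply q p μ N b 0) hN
  · obtain ⟨b, rfl⟩ := Nat.exists_eq_add_of_le' hb1
    obtain ⟨n, rfl⟩ := Nat.exists_eq_add_of_le' hn1
    exact (hGB (b + 1) 0 (.inl ⟨hb, rfl⟩)).inv_upper_mul_upper_apply_succ_succ
      (hGB b 0 (.inl ⟨by omega, rfl⟩)) (MomC_succ_left_apply q p μ N b 0) n hn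
end
end

section
/- Assume 𝓜_N and all 𝓜_{N,(b,0)} (1 ≤ b ≤ q), 𝓜_{N,(0,a)} (1 ≤ a ≤ p) admit Gauss–Borel factorizations with lower unitriangular factors, and let N ≥ max(p,q). Then the Christoffel-transformed rectangular recursion matrices satisfy, for b ∈ {1,…,q}: U_b · 𝓣^{[N,N−p]}_{(b−1,0)} = 𝓣^{[N,N−p]}_{(b,0)} · U_b^{[N−p]}, and for a ∈ {1,…,p}: 𝓣^{[N−q,N]}_{(0,a−1)} · L_a = L_a^{[N−q]} · 𝓣^{[N−q,N]}_{(0,a)}, where U_b^{[N−p]} and L_a^{[N−q]} denote the leading principal submatrices of U_b and L_a of orders N−p and N−q. -/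
open Matrix MeasureTheory

noncomputable section

/-- Truncated shift matrix `Λ^{[M,M']}_{[r]}`. -/
def Lam (r M M' : ℕ) : Matrix (Fin M) (Fin M') ℝ :=
  Matrix.of fun i j => if (j : ℕ) = (i : ℕ) + r then 1 else 0

/-- Leading principal submatrix of order `n` of an `N × N` matrix. -/
def lead (N n : ℕ) (h : n ≤ N) (A : Matrix (Fin N) (Fin N) ℝ) :
    Matrix (Fin n) (Fin n) ℝ :=
  A.submatrix (Fin.castLE h) (Fin.castLE h)

lemma sum_castLE {N n : ℕ} (h : n ≤ N) (f : Fin N → ℝ)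
    (hf : ∀ k : Fin N, n ≤ (k : ℕ) → f k = 0) :
    ∑ k : Fin N, f k = ∑ k : Fin n, f (Fin.castLE h k) :=
  calc ∑ k : Fin N, f k = ∑ k ∈ Finset.univ.map (Fin.castLEEmb h), f k := by
        symm
        apply Finset.sum_subset (Finset.subset_univ _)
        intro k _ hk
        apply hf
        by_contra hlt
        push_neg at hlt
        exact hk (Finset.mem_map.2 ⟨⟨k, hlt⟩, Finset.mem_univ _, by ext; rfl⟩)
    _ = ∑ k : Fin n, f (Fin.castLE h k) := Finset.sum_map _ _ _

lemma lead_mul_upper {N n : ℕ} (h : n ≤ N) (A B : Matrix (Fin N) (Fin N) ℝ)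
    (hB : ∀ i j : Fin N, j < i → B i j = 0) :
    lead N n h (A * B) = lead N n h A * lead N n h B := by
  ext i j
  simp only [lead, Matrix.submatrix_apply, Matrix.mul_apply]
  exact sum_castLE h _ fun k hk =>
    mul_eq_zero_of_right _
      (hB k (Fin.castLE h j) (Fin.lt_def.mpr (lt_of_lt_of_le j.2 hk)))

lemma lead_mul_lower {N n : ℕ} (h : n ≤ N) (A B : Matrix (Fin N) (Fin N) ℝ)
    (hA : ∀ i j : Fin N, i < j → A i j = 0) :
    lead N n h (A * B) = lead N n h A * lead N n h B := by
  ext i j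
  simp only [lead, Matrix.submatrix_apply, Matrix.mul_apply]
  exact sum_castLE h _ fun k hk =>
    mul_eq_zero_of_left
      (hA (Fin.castLE h i) k (Fin.lt_def.mpr (lt_of_lt_of_le i.2 hk))) _

/-- Intertwining identities between Christoffel-transformed rectangular recursion matrices:
`U_b 𝓣^{[N,N−p]}_{(b−1,0)} = 𝓣^{[N,N−p]}_{(b,0)} U_b^{[N−p]}` and
`𝓣^{[N−q,N]}_{(0,a−1)} L_a = L_a^{[N−q]} 𝓣^{[N−q,N]}_{(0,a)}`. -/
theorem christoffel_recursion_intertwining (p q N : ℕ) (hp : 0 < p) (hq : 0 < q)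
    (hpN : p ≤ N) (hqN : q ≤ N)
    (μ : Fin q → Fin p → Measure ℝ)
    (hμ : ∀ (a : Fin q) (b : Fin p) (k : ℕ),
      Integrable (fun x : ℝ => |x| ^ k) (μ a b))
    (L U : ℕ → ℕ → Matrix (Fin N) (Fin N) ℝ)
    (hfact : ∀ n m : ℕ, (n ≤ q ∧ m = 0) ∨ (n = 0 ∧ m ≤ p) →
      (∀ i j : Fin N, i < j → L n m i j = 0) ∧
      (∀ i : Fin N, L n m i i = 1) ∧
      (∀ i j : Fin N, j < i → U n m i j = 0) ∧
      IsUnit (U n m).det ∧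
      MomC q p μ N n m = (L n m)⁻¹ * (U n m)⁻¹) :
    (∀ b : ℕ, 1 ≤ b → b ≤ q →
      ((U b 0)⁻¹ * U (b - 1) 0) *
          ((U (b - 1) 0)⁻¹ * (Lam p (N - p) N)ᵀ *
            lead N (N - p) (Nat.sub_le N p) (U (b - 1) 0)) =
        ((U b 0)⁻¹ * (Lam p (N - p) N)ᵀ * lead N (N - p) (Nat.sub_le N p) (U b 0)) *
          lead N (N - p) (Nat.sub_le N p) ((U b 0)⁻¹ * U (b - 1) 0)) ∧
    (∀ a : ℕ, 1 ≤ a → a ≤ p →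
      (lead N (N - q) (Nat.sub_le N q) (L 0 (a - 1)) * Lam q (N - q) N *
          (L 0 (a - 1))⁻¹) * (L 0 (a - 1) * (L 0 a)⁻¹) =
        lead N (N - q) (Nat.sub_le N q) (L 0 (a - 1) * (L 0 a)⁻¹) *
          (lead N (N - q) (Nat.sub_le N q) (L 0 a) * Lam q (N - q) N * (L 0 a)⁻¹)) := by
  constructor
  · -- Upper part
    intro b hb1 hbq
    obtain ⟨-, -, hUb_tri, hUb_det, -⟩ := hfact b 0 (Or.inl ⟨hbq, rfl⟩)
    obtain ⟨-, -, hUc_tri, hUc_det, -⟩ :=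
      hfact (b - 1) 0 (Or.inl ⟨le_trans (Nat.sub_le b 1) hbq, rfl⟩)
    haveI : Invertible (U b 0) := (U b 0).invertibleOfIsUnitDet hUb_det
    haveI : Invertible (U (b - 1) 0) := (U (b - 1) 0).invertibleOfIsUnitDet hUc_det
    have hUbB : BlockTriangular (U b 0) id := fun i j hij => hUb_tri i j hij
    have hUcB : BlockTriangular (U (b - 1) 0) id := fun i j hij => hUc_tri i j hij
    have hBinv : BlockTriangular (U b 0)⁻¹ id :=
      blockTriangular_inv_of_blockTriangular hUbB
    have hprod : BlockTriangular ((U b 0)⁻¹ * U (b - 1) 0) id := hBinv.mul hUcB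
    have key : lead N (N - p) (Nat.sub_le N p) (U b 0) *
        lead N (N - p) (Nat.sub_le N p) ((U b 0)⁻¹ * U (b - 1) 0) =
        lead N (N - p) (Nat.sub_le N p) (U (b - 1) 0) := by
      rw [← lead_mul_upper (Nat.sub_le N p) _ _ (fun i j hij => hprod hij),
        Matrix.mul_inv_cancel_left_of_invertible]
    simp only [Matrix.mul_assoc]
    rw [Matrix.mul_inv_cancel_left_of_invertible, key]
  · -- Lower part
    intro a ha1 hap
    obtain ⟨hLa_tri, hLa_diag, -, -, -⟩ := hfact 0 a (Or.inr ⟨rfl, hap⟩)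
    obtain ⟨hLc_tri, hLc_diag, -, -, -⟩ :=
      hfact 0 (a - 1) (Or.inr ⟨rfl, le_trans (Nat.sub_le a 1) hap⟩)
    have hLaB : BlockTriangular (L 0 a) OrderDual.toDual := fun i j hij =>
      hLa_tri i j hij
    have hLcB : BlockTriangular (L 0 (a - 1)) OrderDual.toDual := fun i j hij =>
      hLc_tri i j hij
    have hLa_det : IsUnit (L 0 a).det := by
      rw [Matrix.det_of_lowerTriangular _ hLaB]
      simp [hLa_diag]
    have hLc_det : IsUnit (L 0 (a - 1)).det := by
      rw [Matrix.det_of_lowerTriangular _ hLcB]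
      simp [hLc_diag]
    haveI : Invertible (L 0 a) := (L 0 a).invertibleOfIsUnitDet hLa_det
    haveI : Invertible (L 0 (a - 1)) := (L 0 (a - 1)).invertibleOfIsUnitDet hLc_det
    have hBinv : BlockTriangular (L 0 a)⁻¹ OrderDual.toDual :=
      blockTriangular_inv_of_blockTriangular hLaB
    have hprod : BlockTriangular (L 0 (a - 1) * (L 0 a)⁻¹) OrderDual.toDual :=
      hLcB.mul hBinv
    have key : lead N (N - q) (Nat.sub_le N q) (L 0 (a - 1) * (L 0 a)⁻¹) *
        lead N (N - q) (Nat.sub_le N q) (L 0 a) =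
        lead N (N - q) (Nat.sub_le N q) (L 0 (a - 1)) := by
      rw [← lead_mul_lower (Nat.sub_le N q) _ _ (fun i j hij => hprod hij),
        Matrix.mul_assoc, Matrix.inv_mul_of_invertible, Matrix.mul_one]
    simp only [Matrix.mul_assoc]
    rw [Matrix.inv_mul_cancel_left_of_invertible,
      ← Matrix.mul_assoc (lead N (N - q) (Nat.sub_le N q) (L 0 (a - 1) * (L 0 a)⁻¹)), key]
end
end

section
/- Assume 𝓜_N and all 𝓜_{N,(b,0)} (1 ≤ b ≤ q), 𝓜_{N,(0,a)} (1 ≤ a ≤ p) admit Gauss–Borel factorizations with lower unitriangular factors, and assume that all tau-determinants appearing below are nonzero. Then the entries of the bidiagonal factors are given by the Christoffel formulas: for b ∈ {1,…,q} and n ∈ {0,…,N−b−1}, (U_b)_{n,n} = −(τ^B_{b−1,n} · τ^B_{b,n+1}) / (τ^B_{b−1,n+1} · τ^B_{b,n}); and for a ∈ {1,…,p} and n ∈ {0,…,N−a−2}, (L_a)_{n+1,n} = −(τ^A_{a−1,n+2} · τ^A_{a,n}) / (τ^A_{a−1,n+1} · τ^A_{a,n+1}). -/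
open Matrix MeasureTheory

noncomputable section

/-- The tau-determinant `τ^B_{b,n}`. -/
def tauB {N q : ℕ} (B0 : Matrix (Fin N) (Fin q) ℝ) (b n : ℕ)
    (hb : b ≤ q) (h : n + b ≤ N) : ℝ :=
  (Matrix.of fun i j : Fin b =>
    B0 ⟨n + (i : ℕ), by have := i.isLt; omega⟩
       ⟨(j : ℕ), by have := j.isLt; omega⟩).det

/-- The tau-determinant `τ^A_{a,n}`. -/
def tauA {N p : ℕ} (A0 : Matrix (Fin p) (Fin N) ℝ) (a n : ℕ)
    (ha : a ≤ p) (h : n + a ≤ N) : ℝ :=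
  (Matrix.of fun i j : Fin a =>
    A0 ⟨(i : ℕ), by have := i.isLt; omega⟩
       ⟨n + a - 1 - (j : ℕ), by have := j.isLt; omega⟩).det

lemma xmat_mul_pow (r M : ℕ) (hr : 0 < r) (x : ℝ) (m : ℕ) (i : Fin M) (a : Fin r) :
    (Xmat r M x * frakX r 1 x ^ m) i a =
      if ((i : ℕ) + m) % r = (a : ℕ) then x ^ (((i : ℕ) + m) / r) else 0 := by
  induction m generalizing a with
  | zero => simp [Xmat]
  | succ m ih =>
    rw [pow_succ, ← Matrix.mul_assoc, Matrix.mul_apply]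
    set t := ((i : ℕ) + m) % r with htdef
    have htr : t < r := Nat.mod_lt _ hr
    have hD : r * (((i : ℕ) + m) / r) + t = (i : ℕ) + m := Nat.div_add_mod _ r
    set D := ((i : ℕ) + m) / r with hDdef
    have hmain : ∀ s : Fin r, (Xmat r M x * frakX r 1 x ^ m) i s * frakX r 1 x s a
        = if s = (⟨t, htr⟩ : Fin r) then x ^ D * frakX r 1 x s a else 0 := by
      intro s; rw [ih s]
      by_cases hs : s = (⟨t, htr⟩ : Fin r)
      · rw [if_pos hs, if_pos (by rw [hs])]
      · rw [if_neg hs, if_neg (fun hh => hs (Fin.ext hh.symm)), zero_mul]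
    rw [Finset.sum_congr rfl (fun s _ => hmain s), Finset.sum_ite_eq' Finset.univ
      (⟨t, htr⟩ : Fin r) (fun s => x ^ D * frakX r 1 x s a), if_pos (Finset.mem_univ _)]
    by_cases hlt : t < r - 1
    · have hfa : frakX r 1 x ⟨t, htr⟩ a = if (a : ℕ) = t + 1 then 1 else 0 := by
        simp only [frakX, Matrix.of_apply]
        by_cases ha : (a : ℕ) = t + 1
        · rw [if_pos ⟨hlt, ha⟩, if_pos ha]
        · rw [if_neg (fun hh => ha hh.2), if_neg (by rintro ⟨h1, h2⟩; omega), if_neg ha]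
      have h1 : ((i : ℕ) + (m + 1)) % r = t + 1 := by
        rw [show (i : ℕ) + (m + 1) = r * D + (t + 1) by omega, Nat.mul_add_mod]
        exact Nat.mod_eq_of_lt (by omega)
      have h2 : ((i : ℕ) + (m + 1)) / r = D := by
        rw [show (i : ℕ) + (m + 1) = r * D + (t + 1) by omega, Nat.mul_add_div hr,
          Nat.div_eq_of_lt (by omega), add_zero]
      rw [hfa, h1, h2]
      by_cases ha : (a : ℕ) = t + 1
      · rw [if_pos ha, if_pos ha.symm, mul_one]
      · rw [if_neg ha, if_neg (fun hh => ha hh.symm), mul_zero]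
    · have ht1 : t = r - 1 := by omega
      have hfa : frakX r 1 x ⟨t, htr⟩ a = if (a : ℕ) = 0 then x else 0 := by
        simp only [frakX, Matrix.of_apply]
        by_cases ha : (a : ℕ) = 0
        · rw [if_neg (by rintro ⟨h1, h2⟩; omega), if_pos ⟨by omega, by omega⟩, if_pos ha]
        · rw [if_neg (by rintro ⟨h1, h2⟩; omega), if_neg (by rintro ⟨h1, h2⟩; omega), if_neg ha]
      have h1 : ((i : ℕ) + (m + 1)) % r = 0 := by
        rw [show (i : ℕ) + (m + 1) = r * (D + 1) by rw [Nat.mul_succ]; omega, Nat.mul_mod_right]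
      have h2 : ((i : ℕ) + (m + 1)) / r = D + 1 := by
        rw [show (i : ℕ) + (m + 1) = r * (D + 1) by rw [Nat.mul_succ]; omega,
          Nat.mul_div_cancel_left _ hr]
      rw [hfa, h1, h2]
      by_cases ha : (a : ℕ) = 0
      · rw [if_pos ha, if_pos ha.symm, pow_succ]
      · rw [if_neg ha, if_neg (fun hh => ha hh.symm), mul_zero]

lemma momC_shift {q p N : ℕ} (hq : 0 < q) (hp : 0 < p) (μ : Fin q → Fin p → Measure ℝ)
    (n m : ℕ) (i j i' j' : Fin N) (hi : (i' : ℕ) = (i : ℕ) + n) (hj : (j' : ℕ) = (j : ℕ) + m) :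
    MomC q p μ N n m i j = MomC q p μ N 0 0 i' j' := by
  simp only [MomC, Matrix.of_apply, xmat_mul_pow q N hq, xmat_mul_pow p N hp, hi, hj,
    Nat.add_zero]

namespace Chr

variable {N : ℕ}

/-- lower triangular -/
def Lo (M : Matrix (Fin N) (Fin N) ℝ) : Prop := ∀ i j : Fin N, i < j → M i j = 0
/-- upper triangular -/
def Up (M : Matrix (Fin N) (Fin N) ℝ) : Prop := ∀ i j : Fin N, j < i → M i j = 0

lemma Up.blockTriangular {M : Matrix (Fin N) (Fin N) ℝ} (h : Up M) :
    M.BlockTriangular id := fun _ _ hij => h _ _ hij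

lemma Lo.blockTriangular {M : Matrix (Fin N) (Fin N) ℝ} (h : Lo M) :
    M.BlockTriangular (OrderDual.toDual : Fin N → (Fin N)ᵒᵈ) := fun _ _ hij => h _ _ hij

lemma Up.inv {M : Matrix (Fin N) (Fin N) ℝ} (h : Up M) (hd : IsUnit M.det) : Up M⁻¹ := by
  haveI := M.invertibleOfIsUnitDet hd
  exact fun i j hij => Matrix.blockTriangular_inv_of_blockTriangular h.blockTriangular hij

lemma Lo.inv {M : Matrix (Fin N) (Fin N) ℝ} (h : Lo M) (hd : IsUnit M.det) : Lo M⁻¹ := by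
  haveI := M.invertibleOfIsUnitDet hd
  exact fun i j hij => Matrix.blockTriangular_inv_of_blockTriangular h.blockTriangular hij

lemma Lo.det {M : Matrix (Fin N) (Fin N) ℝ} (h : Lo M) (hdiag : ∀ i, M i i = 1) :
    M.det = 1 := by
  rw [Matrix.det_of_lowerTriangular M h.blockTriangular]
  simp [hdiag]

lemma mul_diag_up {X Y : Matrix (Fin N) (Fin N) ℝ} (hX : Up X) (hY : Up Y) (n : Fin N) :
    (X * Y) n n = X n n * Y n n := by
  rw [Matrix.mul_apply]
  apply Finset.sum_eq_single n
  · intro s _ hs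
    rcases lt_or_gt_of_ne hs with hlt | hgt
    · rw [hX _ _ hlt, zero_mul]
    · rw [hY _ _ hgt, mul_zero]
  · intro hn; exact absurd (Finset.mem_univ _) hn

lemma inv_diag_mul_self {M : Matrix (Fin N) (Fin N) ℝ} (h : Up M) (hd : IsUnit M.det)
    (n : Fin N) : M⁻¹ n n * M n n = 1 := by
  have h1 := Matrix.nonsing_inv_mul M hd
  have h2 := mul_diag_up (h.inv hd) h n
  rw [h1] at h2
  rw [← h2, Matrix.one_apply_eq]

/-- embedding of an interval of `Fin k` into `Fin N` with offset `r` -/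
def emb (N r k : ℕ) (h : r + k ≤ N) : Fin k → Fin N := fun i => ⟨(i : ℕ) + r, by omega⟩

lemma emb_val {r k : ℕ} (h : r + k ≤ N) (i : Fin k) : (emb N r k h i : ℕ) = i + r := rfl

lemma sum_fin_restrict {k : ℕ} (h : k ≤ N) (F : Fin N → ℝ)
    (hF : ∀ t : Fin N, k ≤ (t : ℕ) → F t = 0) :
    ∑ t : Fin N, F t = ∑ s : Fin k, F ⟨s, by omega⟩ := by
  classical
  set f : ℕ → ℝ := fun t => if ht : t < N then F ⟨t, ht⟩ else 0 with hf
  have h1 : ∑ t : Fin N, F t = ∑ t ∈ Finset.range N, f t := by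
    rw [← Fin.sum_univ_eq_sum_range f N]
    exact Finset.sum_congr rfl fun t _ => by simp [hf]
  have h2 : ∑ s : Fin k, F ⟨s, by omega⟩ = ∑ t ∈ Finset.range k, f t := by
    rw [← Fin.sum_univ_eq_sum_range f k]
    refine Finset.sum_congr rfl fun s _ => ?_
    have hs : (s : ℕ) < N := by omega
    simp [hf, hs]
  rw [h1, h2]
  refine (Finset.sum_subset (by intro t htk; simp at htk ⊢; omega) ?_).symm
  intro t htN htk
  simp only [Finset.mem_range] at htN htk
  simp only [hf, dif_pos htN]
  exact hF ⟨t, htN⟩ (Nat.le_of_not_lt htk)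

lemma mul_submatrix_up {k r : ℕ} (P Q : Matrix (Fin N) (Fin N) ℝ) (hQ : Up Q)
    (h : r + k ≤ N) (h0 : 0 + k ≤ N) :
    (P * Q).submatrix (emb N r k h) (emb N 0 k h0) =
      P.submatrix (emb N r k h) (emb N 0 k h0) * Q.submatrix (emb N 0 k h0) (emb N 0 k h0) := by
  ext i j
  simp only [Matrix.submatrix_apply, Matrix.mul_apply]
  rw [sum_fin_restrict (by omega : k ≤ N)
    (fun t => P (emb N r k h i) t * Q t (emb N 0 k h0 j))
    (fun t ht => by
      rw [hQ t (emb N 0 k h0 j) (by simp only [Fin.lt_def, emb_val]; omega), mul_zero])]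
  rfl

lemma mul_submatrix_lo {k c : ℕ} (P Q : Matrix (Fin N) (Fin N) ℝ) (hP : Lo P)
    (h : c + k ≤ N) (h0 : 0 + k ≤ N) :
    (P * Q).submatrix (emb N 0 k h0) (emb N c k h) =
      P.submatrix (emb N 0 k h0) (emb N 0 k h0) * Q.submatrix (emb N 0 k h0) (emb N c k h) := by
  ext i j
  simp only [Matrix.submatrix_apply, Matrix.mul_apply]
  rw [sum_fin_restrict (by omega : k ≤ N)
    (fun t => P (emb N 0 k h0 i) t * Q t (emb N c k h j))
    (fun t ht => by
      rw [hP (emb N 0 k h0 i) t (by simp only [Fin.lt_def, emb_val]; omega), zero_mul])]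
  rfl

lemma one_submatrix {k : ℕ} (h0 : 0 + k ≤ N) :
    (1 : Matrix (Fin N) (Fin N) ℝ).submatrix (emb N 0 k h0) (emb N 0 k h0) = 1 := by
  ext i j
  by_cases hij : i = j
  · subst hij
    rw [Matrix.submatrix_apply, Matrix.one_apply_eq, Matrix.one_apply_eq]
  · rw [Matrix.submatrix_apply, Matrix.one_apply_ne
      (fun hc => hij (Fin.ext (by simpa [emb, Fin.ext_iff] using hc))),
      Matrix.one_apply_ne hij]

lemma det_up_submatrix {k : ℕ} (Q : Matrix (Fin N) (Fin N) ℝ) (hQ : Up Q) (h0 : 0 + k ≤ N) :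
    (Q.submatrix (emb N 0 k h0) (emb N 0 k h0)).det =
      ∏ j : Fin k, Q (emb N 0 k h0 j) (emb N 0 k h0 j) := by
  rw [Matrix.det_of_upperTriangular]
  · rfl
  · intro i j hij
    refine hQ _ _ ?_
    simp only [id] at hij
    simp only [Fin.lt_def, emb_val]
    have := Fin.lt_def.mp hij
    omega

lemma det_lo_submatrix_one {k : ℕ} (P : Matrix (Fin N) (Fin N) ℝ) (hP : Lo P)
    (hdiag : ∀ i, P i i = 1) (h0 : 0 + k ≤ N) :
    (P.submatrix (emb N 0 k h0) (emb N 0 k h0)).det = 1 := by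
  rw [Matrix.det_of_lowerTriangular]
  · simp [hdiag]
  · intro i j hij
    refine hP _ _ ?_
    have h2 : (i : ℕ) < (j : ℕ) := by simpa using hij
    simp only [Fin.lt_def, emb_val]
    omega

lemma leading_block_inv_up {K : ℕ} (P Q : Matrix (Fin N) (Fin N) ℝ) (hQ : Up Q)
    (hPQ : P * Q = 1) (h0 : 0 + K ≤ N) :
    P.submatrix (emb N 0 K h0) (emb N 0 K h0) * Q.submatrix (emb N 0 K h0) (emb N 0 K h0)
      = 1 := by
  rw [← mul_submatrix_up P Q hQ h0 h0, hPQ, one_submatrix]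

lemma leading_block_inv_lo {K : ℕ} (P Q : Matrix (Fin N) (Fin N) ℝ) (hP : Lo P)
    (hPQ : P * Q = 1) (h0 : 0 + K ≤ N) :
    P.submatrix (emb N 0 K h0) (emb N 0 K h0) * Q.submatrix (emb N 0 K h0) (emb N 0 K h0)
      = 1 := by
  rw [← mul_submatrix_lo P Q hP h0 h0, hPQ, one_submatrix]

end Chr

namespace Chr

lemma rot_pow_val (n m : ℕ) (t : Fin n) :
    ((((finRotate n) ^ m) t : Fin n) : ℕ) = ((t : ℕ) + m) % n := by
  cases n with
  | zero => exact t.elim0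
  | succ s =>
    induction m generalizing t with
    | zero => simp [Nat.mod_eq_of_lt t.isLt]
    | succ m ih =>
      rw [pow_succ, Equiv.Perm.mul_apply, finRotate_succ_apply, ih (t + 1)]
      rw [Fin.val_add, Nat.mod_add_mod]
      show ((t : ℕ) + (1 : Fin (s+1)).val + m) % (s+1) = ((t : ℕ) + (m+1)) % (s+1)
      have h1 : ((1 : Fin (s+1)).val) = 1 % (s+1) := Fin.val_one' (s+1)
      rw [h1, (((Nat.mod_modEq 1 (s+1)).add_left (t : ℕ)).add_right m : _ % _ = _),
        show (t : ℕ) + 1 + m = (t : ℕ) + (m + 1) by omega]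

lemma key_block {k m : ℕ} (G H : Matrix (Fin k ⊕ Fin m) (Fin k ⊕ Fin m) ℝ)
    (hGH : G * H = 1) :
    G.det * (H.toBlocks₁₁).det = (G.toBlocks₂₂).det := by
  have hGH' := hGH
  rw [← Matrix.fromBlocks_toBlocks G, ← Matrix.fromBlocks_toBlocks H,
    Matrix.fromBlocks_multiply, ← Matrix.fromBlocks_one] at hGH'
  have h11 := congrArg Matrix.toBlocks₁₁ hGH'
  have h21 := congrArg Matrix.toBlocks₂₁ hGH'
  simp only [Matrix.toBlocks_fromBlocks₁₁, Matrix.toBlocks_fromBlocks₂₁] at h11 h21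
  have e1 : G * Matrix.fromBlocks H.toBlocks₁₁ 0 H.toBlocks₂₁ 1 =
      Matrix.fromBlocks 1 G.toBlocks₁₂ 0 G.toBlocks₂₂ := by
    conv_lhs => rw [← Matrix.fromBlocks_toBlocks G]
    rw [Matrix.fromBlocks_multiply]
    rw [h11, h21]
    simp
  have e2 := congrArg Matrix.det e1
  rw [Matrix.det_mul, Matrix.det_fromBlocks_zero₁₂, Matrix.det_fromBlocks_zero₂₁,
    Matrix.det_one, Matrix.det_one, mul_one, one_mul] at e2
  exact e2

lemma jacobi {k m K : ℕ} (hK : k + m = K) (A B : Matrix (Fin K) (Fin K) ℝ)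
    (hAB : A * B = 1) :
    (B.submatrix (fun i : Fin k => (⟨(i : ℕ) + m, by omega⟩ : Fin K))
        (fun j : Fin k => (⟨(j : ℕ), by omega⟩ : Fin K))).det * A.det
      = (-1 : ℝ) ^ (k * m) *
        (A.submatrix (fun i : Fin m => (⟨(i : ℕ) + k, by omega⟩ : Fin K))
          (fun j : Fin m => (⟨(j : ℕ), by omega⟩ : Fin K))).det := by
  have hρσ : True := trivial
  -- equivalences
  let ρ : Fin k ⊕ Fin m ≃ Fin K := finSumFinEquiv.trans (finCongr hK)
  let σ : Fin k ⊕ Fin m ≃ Fin K :=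
    (Equiv.sumComm (Fin k) (Fin m)).trans
      ((finSumFinEquiv : Fin m ⊕ Fin k ≃ Fin (m + k)).trans (finCongr (by omega)))
  have hρl : ∀ i : Fin k, (ρ (Sum.inl i) : ℕ) = (i : ℕ) := by
    intro i; simp [ρ, finSumFinEquiv_apply_left]
  have hρr : ∀ j : Fin m, (ρ (Sum.inr j) : ℕ) = k + (j : ℕ) := by
    intro j; simp [ρ, finSumFinEquiv_apply_right]
  have hσl : ∀ i : Fin k, (σ (Sum.inl i) : ℕ) = m + (i : ℕ) := by
    intro i; simp [σ, finSumFinEquiv_apply_right]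
  have hσr : ∀ j : Fin m, (σ (Sum.inr j) : ℕ) = (j : ℕ) := by
    intro j; simp [σ, finSumFinEquiv_apply_left]
  set G : Matrix (Fin k ⊕ Fin m) (Fin k ⊕ Fin m) ℝ := A.submatrix ρ σ with hG
  set H : Matrix (Fin k ⊕ Fin m) (Fin k ⊕ Fin m) ℝ := B.submatrix σ ρ with hH
  have hGH : G * H = 1 := by
    rw [hG, hH, Matrix.submatrix_mul_equiv A B ρ σ ρ, hAB, Matrix.submatrix_one_equiv]
  have hkey := key_block G H hGH
  -- identify the blocks
  have hH11 : H.toBlocks₁₁ = B.submatrix (fun i : Fin k => (⟨(i : ℕ) + m, by omega⟩ : Fin K))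
      (fun j : Fin k => (⟨(j : ℕ), by omega⟩ : Fin K)) := by
    ext i j
    simp only [Matrix.toBlocks₁₁, Matrix.of_apply, hH, Matrix.submatrix_apply]
    rw [show σ (Sum.inl i) = (⟨(i : ℕ) + m, by omega⟩ : Fin K) from Fin.ext ((hσl i).trans (Nat.add_comm m ↑i)),
      show ρ (Sum.inl j) = (⟨(j : ℕ), by omega⟩ : Fin K) from Fin.ext (by rw [hρl j])]
  have hG22 : G.toBlocks₂₂ = A.submatrix (fun i : Fin m => (⟨(i : ℕ) + k, by omega⟩ : Fin K))
      (fun j : Fin m => (⟨(j : ℕ), by omega⟩ : Fin K)) := by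
    ext i j
    simp only [Matrix.toBlocks₂₂, Matrix.of_apply, hG, Matrix.submatrix_apply]
    rw [show ρ (Sum.inr i) = (⟨(i : ℕ) + k, by omega⟩ : Fin K) from Fin.ext ((hρr i).trans (Nat.add_comm k ↑i)),
      show σ (Sum.inr j) = (⟨(j : ℕ), by omega⟩ : Fin K) from Fin.ext (by rw [hσr j])]
  -- determinant of G
  have hGdet : G.det = (-1 : ℝ) ^ (k * m) * A.det := by
    have hπ : G = (A.submatrix ρ ρ).submatrix id ⇑(σ.trans ρ.symm) := by
      ext i j
      simp [hG, Matrix.submatrix_apply]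
    rw [hπ, Matrix.det_permute' (σ.trans ρ.symm) (A.submatrix ρ ρ),
      Matrix.det_submatrix_equiv_self]
    congr 1
    -- sign computation
    have hconj : Equiv.Perm.sign (σ.trans ρ.symm) =
        Equiv.Perm.sign (Equiv.permCongr ρ (σ.trans ρ.symm)) :=
      (Equiv.Perm.sign_permCongr ρ _).symm
    have hrot : Equiv.permCongr ρ (σ.trans ρ.symm) = (finRotate K) ^ m := by
      apply Equiv.ext
      intro t
      obtain ⟨x, rfl⟩ := ρ.surjective t
      have : (Equiv.permCongr ρ (σ.trans ρ.symm)) (ρ x) = σ x := by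
        simp [Equiv.permCongr_apply]
      rw [this]
      apply Fin.ext
      rw [rot_pow_val]
      cases x with
      | inl i => rw [hσl i, hρl i]; rw [Nat.mod_eq_of_lt (by omega)]; omega
      | inr j =>
        rw [hσr j, hρr j]
        rw [show k + (j : ℕ) + m = (j : ℕ) + K by omega, Nat.add_mod_right,
          Nat.mod_eq_of_lt (by omega)]
    rw [hconj, hrot]
    -- sign of finRotate K ^ m
    rcases Nat.eq_zero_or_pos m with hm | hm
    · subst hm; simp
    · obtain ⟨s, hs⟩ : ∃ s, K = s + 1 := ⟨K - 1, by omega⟩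
      subst hs
      rw [map_pow, sign_finRotate]
      push_cast
      rw [← pow_mul]
      have hsm : s * m = k * m + (m - 1) * m := by
        have : s = k + (m - 1) := by omega
        rw [this, Nat.add_mul]
      rw [hsm, pow_add]
      have heven : Even ((m - 1) * m) := by
        have := Nat.even_mul_succ_self (m - 1)
        rwa [show m - 1 + 1 = m by omega] at this
      rw [heven.neg_one_pow, mul_one]
  -- combine
  rw [hH11, hG22] at hkey
  rw [hGdet] at hkey
  have hsq : ((-1 : ℝ) ^ (k * m)) * ((-1 : ℝ) ^ (k * m)) = 1 := by
    rw [← pow_add]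
    exact Even.neg_one_pow ⟨k * m, rfl⟩
  set e : ℝ := (-1 : ℝ) ^ (k * m)
  set a : ℝ := A.det
  set Bs : ℝ := (B.submatrix (fun i : Fin k => (⟨(i : ℕ) + m, by omega⟩ : Fin K))
      (fun j : Fin k => (⟨(j : ℕ), by omega⟩ : Fin K))).det
  set As : ℝ := (A.submatrix (fun i : Fin m => (⟨(i : ℕ) + k, by omega⟩ : Fin K))
      (fun j : Fin m => (⟨(j : ℕ), by omega⟩ : Fin K))).det
  -- hkey : e * a * Bs = As ; goal : Bs * a = e * As
  linear_combination e * hkey - a * Bs * hsq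

end Chr

namespace Chr

lemma jacobi' {k m K : ℕ} (hK : k + m = K) (A B : Matrix (Fin K) (Fin K) ℝ)
    (hAB : A * B = 1) :
    (B.submatrix (fun i : Fin k => (⟨(i : ℕ), by omega⟩ : Fin K))
        (fun j : Fin k => (⟨(j : ℕ) + m, by omega⟩ : Fin K))).det * A.det
      = (-1 : ℝ) ^ (k * m) *
        (A.submatrix (fun i : Fin m => (⟨(i : ℕ), by omega⟩ : Fin K))
          (fun j : Fin m => (⟨(j : ℕ) + k, by omega⟩ : Fin K))).det := by
  have hJ := jacobi (show m + k = K by omega) Bᵀ Aᵀ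
    (by rw [← Matrix.transpose_mul, hAB, Matrix.transpose_one])
  rw [← Matrix.transpose_submatrix, ← Matrix.transpose_submatrix, Matrix.det_transpose,
    Matrix.det_transpose, Matrix.det_transpose] at hJ
  have hdet : A.det * B.det = 1 := by rw [← Matrix.det_mul, hAB, Matrix.det_one]
  have hsq : ((-1 : ℝ) ^ (k * m)) * ((-1 : ℝ) ^ (k * m)) = 1 := by
    rw [← pow_add]; exact Even.neg_one_pow ⟨k * m, rfl⟩
  have he : ((-1 : ℝ) ^ (m * k)) = (-1 : ℝ) ^ (k * m) := by rw [Nat.mul_comm]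
  rw [he] at hJ
  set e : ℝ := (-1 : ℝ) ^ (k * m)
  set a : ℝ := A.det
  set b : ℝ := B.det
  set As : ℝ := (A.submatrix (fun i : Fin m => (⟨(i : ℕ), by omega⟩ : Fin K))
    (fun j : Fin m => (⟨(j : ℕ) + k, by omega⟩ : Fin K))).det
  set Bs : ℝ := (B.submatrix (fun i : Fin k => (⟨(i : ℕ), by omega⟩ : Fin K))
    (fun j : Fin k => (⟨(j : ℕ) + m, by omega⟩ : Fin K))).det
  -- hJ : As * b = e * Bs ; hdet : a * b = 1 ; goal : Bs * a = e * As
  linear_combination (-(a * e)) * hJ + (e * As) * hdet + (-(a * Bs)) * hsq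

lemma xmat0_apply (r M : ℕ) (hr : 0 < r) (s : Fin M) (j : Fin r) :
    Xmat r M 0 s j = if (s : ℕ) = (j : ℕ) then 1 else 0 := by
  by_cases hs : (s : ℕ) < r
  · have h1 : (s : ℕ) % r = (s : ℕ) := Nat.mod_eq_of_lt hs
    have h2 : (s : ℕ) / r = 0 := Nat.div_eq_of_lt hs
    simp [Xmat, h1, h2]
  · have hge : r ≤ (s : ℕ) := not_lt.mp hs
    have h1 : (s : ℕ) / r ≠ 0 := (Nat.div_pos hge hr).ne'
    have hj : (j : ℕ) < r := j.isLt
    simp only [Xmat, Matrix.of_apply, zero_pow h1]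
    rw [ite_self, if_neg (by omega : ¬ (s : ℕ) = (j : ℕ))]

lemma mul_xmat0 {N q : ℕ} (hq : 0 < q) (L0 : Matrix (Fin N) (Fin N) ℝ) (i : Fin N)
    (j : Fin q) (hj : (j : ℕ) < N) :
    (L0 * Xmat q N 0) i j = L0 i ⟨(j : ℕ), hj⟩ := by
  rw [Matrix.mul_apply, Finset.sum_eq_single (⟨(j : ℕ), hj⟩ : Fin N)]
  · rw [xmat0_apply q N hq, if_pos rfl, mul_one]
  · intro s _ hs
    rw [xmat0_apply q N hq, if_neg (fun hc => hs (Fin.ext hc)), mul_zero]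
  · exact fun hn => absurd (Finset.mem_univ _) hn

lemma xmat0T_mul {N p : ℕ} (hp : 0 < p) (U0 : Matrix (Fin N) (Fin N) ℝ) (i : Fin p)
    (hi : (i : ℕ) < N) (j : Fin N) :
    ((Xmat p N 0)ᵀ * U0) i j = U0 ⟨(i : ℕ), hi⟩ j := by
  rw [Matrix.mul_apply, Finset.sum_eq_single (⟨(i : ℕ), hi⟩ : Fin N)]
  · rw [Matrix.transpose_apply, xmat0_apply p N hp, if_pos rfl, one_mul]
  · intro s _ hs
    rw [Matrix.transpose_apply, xmat0_apply p N hp, if_neg (fun hc => hs (Fin.ext hc)), zero_mul]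
  · exact fun hn => absurd (Finset.mem_univ _) hn

end Chr

namespace Chr

lemma tauB_eq {N q : ℕ} (hq : 0 < q) (L0 : Matrix (Fin N) (Fin N) ℝ) (b n : ℕ)
    (hb : b ≤ q) (h : n + b ≤ N) :
    tauB (L0 * Xmat q N 0) b n hb h =
      (L0.submatrix (fun i : Fin b => (⟨(i : ℕ) + n, by omega⟩ : Fin N))
        (fun j : Fin b => (⟨(j : ℕ), by omega⟩ : Fin N))).det := by
  unfold tauB
  congr 1
  ext i j
  simp only [Matrix.of_apply, Matrix.submatrix_apply]
  have hjN : (j : ℕ) < N := by have := j.isLt; omega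
  rw [mul_xmat0 hq L0 _ ⟨(j : ℕ), by have := j.isLt; omega⟩ hjN]
  congr 1
  exact Fin.ext (Nat.add_comm n i)

lemma tauA_eq {N p : ℕ} (hp : 0 < p) (U0 : Matrix (Fin N) (Fin N) ℝ) (a k : ℕ)
    (ha : a ≤ p) (h : k + a ≤ N) :
    tauA ((Xmat p N 0)ᵀ * U0) a k ha h =
      ((Equiv.Perm.sign (Fin.revPerm : Equiv.Perm (Fin a)) : ℤ) : ℝ) *
      (U0.submatrix (fun i : Fin a => (⟨(i : ℕ), by omega⟩ : Fin N))
        (fun j : Fin a => (⟨(j : ℕ) + k, by omega⟩ : Fin N))).det := by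
  unfold tauA
  have hent : (Matrix.of fun i j : Fin a =>
      ((Xmat p N 0)ᵀ * U0) ⟨(i : ℕ), by have := i.isLt; omega⟩
        ⟨k + a - 1 - (j : ℕ), by have := j.isLt; omega⟩)
      = ((U0.submatrix (fun i : Fin a => (⟨(i : ℕ), by omega⟩ : Fin N))
          (fun j : Fin a => (⟨(j : ℕ) + k, by omega⟩ : Fin N))).submatrix id ⇑Fin.revPerm) := by
    ext i j
    simp only [Matrix.of_apply, Matrix.submatrix_apply, id_eq]
    have hiN : (i : ℕ) < N := by have := i.isLt; omega
    rw [xmat0T_mul hp U0 ⟨(i : ℕ), by have := i.isLt; omega⟩ hiN]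
    congr 1
    apply Fin.ext
    have hrev : ((Fin.revPerm j : Fin a) : ℕ) = a - 1 - (j : ℕ) := by
      simp [Fin.revPerm, Fin.rev]
      omega
    simp only [hrev]
    have := j.isLt
    omega
  rw [hent, Matrix.det_permute' Fin.revPerm _]

end Chr

namespace Chr

lemma mul_diag_lo {N : ℕ} {X Y : Matrix (Fin N) (Fin N) ℝ} (hX : Lo X) (hY : Lo Y) (n : Fin N) :
    (X * Y) n n = X n n * Y n n := by
  rw [Matrix.mul_apply]
  apply Finset.sum_eq_single n
  · intro s _ hs
    rcases lt_or_gt_of_ne hs with hlt | hgt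
    · rw [hY _ _ hlt, mul_zero]
    · rw [hX _ _ hgt, zero_mul]
  · intro hn; exact absurd (Finset.mem_univ _) hn

lemma Lo.isUnitDet {N : ℕ} {M : Matrix (Fin N) (Fin N) ℝ} (h : Lo M)
    (hdiag : ∀ i, M i i = 1) : IsUnit M.det := by
  rw [h.det hdiag]; exact isUnit_one

lemma lo_inv_diag {N : ℕ} {M : Matrix (Fin N) (Fin N) ℝ} (h : Lo M)
    (hdiag : ∀ i, M i i = 1) (i : Fin N) : M⁻¹ i i = 1 := by
  have hu := h.isUnitDet hdiag
  have h1 := Matrix.nonsing_inv_mul M hu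
  have h2 := mul_diag_lo (h.inv hu) h i
  rw [h1, Matrix.one_apply_eq, hdiag, mul_one] at h2
  exact h2.symm

/-- `∏_{j<K} U0 j j`, total in `K`. -/
def dprod {N : ℕ} (U0 : Matrix (Fin N) (Fin N) ℝ) : ℕ → ℝ := fun K =>
  ∏ j ∈ Finset.range K, (if h : j < N then U0 ⟨j, h⟩ ⟨j, h⟩ else 1)

lemma dprod_eq {N K : ℕ} (U0 : Matrix (Fin N) (Fin N) ℝ) (h0 : 0 + K ≤ N) :
    ∏ j : Fin K, U0 (emb N 0 K h0 j) (emb N 0 K h0 j) = dprod U0 K := by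
  rw [dprod, ← Fin.prod_univ_eq_prod_range
    (fun j => if h : j < N then U0 ⟨j, h⟩ ⟨j, h⟩ else 1) K]
  exact Finset.prod_congr rfl fun j _ => by rw [dif_pos (by omega : (j : ℕ) < N)]; rfl

lemma dprod_succ {N K : ℕ} (U0 : Matrix (Fin N) (Fin N) ℝ) (h : K < N) :
    dprod U0 (K + 1) = dprod U0 K * U0 ⟨K, h⟩ ⟨K, h⟩ := by
  rw [dprod, Finset.prod_range_succ, dif_pos h]; rfl

lemma dprod_ne_zero {N K : ℕ} (U0 V0 : Matrix (Fin N) (Fin N) ℝ)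
    (h : ∀ j : Fin N, U0 j j * V0 j j = 1) : dprod U0 K ≠ 0 := by
  rw [dprod]
  apply Finset.prod_ne_zero_iff.mpr
  intro j _
  by_cases hj : j < N
  · rw [dif_pos hj]; exact left_ne_zero_of_mul_eq_one (h ⟨j, hj⟩)
  · rw [dif_neg hj]; exact one_ne_zero

/-- leading minor of a shifted (by rows) moment matrix in terms of `τ^B`. -/
lemma deltaB {q p N : ℕ} (hq : 0 < q) (hp : 0 < p) (μ : Fin q → Fin p → Measure ℝ)
    (L0 U0 Lc Uc : Matrix (Fin N) (Fin N) ℝ)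
    (hL0lo : Lo L0) (hL0d : ∀ i, L0 i i = 1) (hU0up : Up U0) (hU0det : IsUnit U0.det)
    (hLclo : Lo Lc) (hLcd : ∀ i, Lc i i = 1) (hUcup : Up Uc) (hUcdet : IsUnit Uc.det)
    (hM00 : MomC q p μ N 0 0 = L0⁻¹ * U0⁻¹)
    (c : ℕ) (hMc : MomC q p μ N c 0 = Lc⁻¹ * Uc⁻¹)
    (k : ℕ) (hc : c ≤ q) (hck : k + c ≤ N) :
    dprod Uc⁻¹ k =
      (-1 : ℝ) ^ (k * c) * tauB (L0 * Xmat q N 0) c k hc hck * dprod U0⁻¹ k := by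
  have h0 : 0 + k ≤ N := by omega
  have hck' : c + k ≤ N := by omega
  have h0K : 0 + (k + c) ≤ N := by omega
  -- step 1 : the leading k×k minor of MomC c 0 equals dprod Uc⁻¹ k
  have hLcinv_lo : Lo Lc⁻¹ := hLclo.inv (hLclo.isUnitDet hLcd)
  have hLcinv_d : ∀ i, Lc⁻¹ i i = 1 := lo_inv_diag hLclo hLcd
  have hUcinv_up : Up Uc⁻¹ := hUcup.inv hUcdet
  have s1 : ((MomC q p μ N c 0).submatrix (emb N 0 k h0) (emb N 0 k h0)).det
      = dprod Uc⁻¹ k := by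
    rw [hMc, mul_submatrix_up Lc⁻¹ Uc⁻¹ hUcinv_up h0 h0, Matrix.det_mul,
      det_lo_submatrix_one Lc⁻¹ hLcinv_lo hLcinv_d h0, one_mul,
      det_up_submatrix Uc⁻¹ hUcinv_up h0, dprod_eq]
  -- step 2 : shift
  have s2 : (MomC q p μ N c 0).submatrix (emb N 0 k h0) (emb N 0 k h0)
      = (MomC q p μ N 0 0).submatrix (emb N c k hck') (emb N 0 k h0) := by
    ext i j
    exact momC_shift hq hp μ c 0 (emb N 0 k h0 i) (emb N 0 k h0 j)
      (emb N c k hck' i) (emb N 0 k h0 j) (by simp [emb_val]) (by simp [emb_val])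
  -- step 3 : factor the shifted minor
  have hL0inv_lo : Lo L0⁻¹ := hL0lo.inv (hL0lo.isUnitDet hL0d)
  have hL0inv_d : ∀ i, L0⁻¹ i i = 1 := lo_inv_diag hL0lo hL0d
  have hU0inv_up : Up U0⁻¹ := hU0up.inv hU0det
  have s3 : ((MomC q p μ N 0 0).submatrix (emb N c k hck') (emb N 0 k h0)).det
      = ((L0⁻¹).submatrix (emb N c k hck') (emb N 0 k h0)).det * dprod U0⁻¹ k := by
    rw [hM00, mul_submatrix_up L0⁻¹ U0⁻¹ hU0inv_up hck' h0, Matrix.det_mul,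
      det_up_submatrix U0⁻¹ hU0inv_up h0, dprod_eq]
  -- step 4 : Jacobi
  have hAB : L0.submatrix (emb N 0 (k+c) h0K) (emb N 0 (k+c) h0K) *
      (L0⁻¹).submatrix (emb N 0 (k+c) h0K) (emb N 0 (k+c) h0K) = 1 :=
    leading_block_inv_lo L0 L0⁻¹ hL0lo
      (Matrix.mul_nonsing_inv L0 (hL0lo.isUnitDet hL0d)) h0K
  have hJ := jacobi (rfl : k + c = k + c)
    (L0.submatrix (emb N 0 (k+c) h0K) (emb N 0 (k+c) h0K))
    ((L0⁻¹).submatrix (emb N 0 (k+c) h0K) (emb N 0 (k+c) h0K)) hAB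
  have hBsub : (((L0⁻¹).submatrix (emb N 0 (k+c) h0K) (emb N 0 (k+c) h0K)).submatrix
      (fun i : Fin k => (⟨(i : ℕ) + c, by omega⟩ : Fin (k+c)))
      (fun j : Fin k => (⟨(j : ℕ), by omega⟩ : Fin (k+c))))
      = (L0⁻¹).submatrix (emb N c k hck') (emb N 0 k h0) := by
    ext i j; rfl
  have hAsub : ((L0.submatrix (emb N 0 (k+c) h0K) (emb N 0 (k+c) h0K)).submatrix
      (fun i : Fin c => (⟨(i : ℕ) + k, by omega⟩ : Fin (k+c)))
      (fun j : Fin c => (⟨(j : ℕ), by omega⟩ : Fin (k+c))))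
      = L0.submatrix (fun i : Fin c => (⟨(i : ℕ) + k, by omega⟩ : Fin N))
          (fun j : Fin c => (⟨(j : ℕ), by omega⟩ : Fin N)) := by
    ext i j; rfl
  rw [hBsub, hAsub, det_lo_submatrix_one L0 hL0lo hL0d h0K, mul_one] at hJ
  -- step 5 : tau
  have hτ : tauB (L0 * Xmat q N 0) c k hc hck =
      (L0.submatrix (fun i : Fin c => (⟨(i : ℕ) + k, by omega⟩ : Fin N))
        (fun j : Fin c => (⟨(j : ℕ), by omega⟩ : Fin N))).det := tauB_eq hq L0 c k hc hck
  rw [← s1, s2, s3, hJ, hτ]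

end Chr

namespace Chr

/-- the sign of the order-reversing permutation, as a real number -/
def eps (a : ℕ) : ℝ := ((Equiv.Perm.sign (Fin.revPerm : Equiv.Perm (Fin a)) : ℤ) : ℝ)

lemma eps_mul_self (a : ℕ) : eps a * eps a = 1 := by
  rw [eps, ← Int.cast_mul, ← Units.val_mul, Int.units_mul_self]
  norm_num

lemma eps_ne_zero (a : ℕ) : eps a ≠ 0 := fun h => by
  have := eps_mul_self a
  rw [h, zero_mul] at this
  exact zero_ne_one this

/-- leading minor of a column-shifted moment matrix in terms of `τ^A`. -/
lemma deltaA {q p N : ℕ} (hq : 0 < q) (hp : 0 < p) (μ : Fin q → Fin p → Measure ℝ)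
    (L0 U0 Lm Um : Matrix (Fin N) (Fin N) ℝ)
    (hL0lo : Lo L0) (hL0d : ∀ i, L0 i i = 1) (hU0up : Up U0) (hU0det : IsUnit U0.det)
    (hLmlo : Lo Lm) (hLmd : ∀ i, Lm i i = 1) (hUmup : Up Um) (hUmdet : IsUnit Um.det)
    (hM00 : MomC q p μ N 0 0 = L0⁻¹ * U0⁻¹)
    (m : ℕ) (hMm : MomC q p μ N 0 m = Lm⁻¹ * Um⁻¹)
    (k : ℕ) (hm : m ≤ p) (hkm : k + m ≤ N) :
    dprod Um⁻¹ k * dprod U0 (k + m) =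
      (-1 : ℝ) ^ (k * m) * eps m * tauA ((Xmat p N 0)ᵀ * U0) m k hm hkm := by
  have h0 : 0 + k ≤ N := by omega
  have hmk' : m + k ≤ N := by omega
  have h0K : 0 + (k + m) ≤ N := by omega
  have hLminv_lo : Lo Lm⁻¹ := hLmlo.inv (hLmlo.isUnitDet hLmd)
  have hLminv_d : ∀ i, Lm⁻¹ i i = 1 := lo_inv_diag hLmlo hLmd
  have hUminv_up : Up Um⁻¹ := hUmup.inv hUmdet
  have s1 : ((MomC q p μ N 0 m).submatrix (emb N 0 k h0) (emb N 0 k h0)).det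
      = dprod Um⁻¹ k := by
    rw [hMm, mul_submatrix_up Lm⁻¹ Um⁻¹ hUminv_up h0 h0, Matrix.det_mul,
      det_lo_submatrix_one Lm⁻¹ hLminv_lo hLminv_d h0, one_mul,
      det_up_submatrix Um⁻¹ hUminv_up h0, dprod_eq]
  have s2 : (MomC q p μ N 0 m).submatrix (emb N 0 k h0) (emb N 0 k h0)
      = (MomC q p μ N 0 0).submatrix (emb N 0 k h0) (emb N m k hmk') := by
    ext i j
    exact momC_shift hq hp μ 0 m (emb N 0 k h0 i) (emb N 0 k h0 j)
      (emb N 0 k h0 i) (emb N m k hmk' j) (by simp [emb_val]) (by simp [emb_val])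
  have hL0inv_lo : Lo L0⁻¹ := hL0lo.inv (hL0lo.isUnitDet hL0d)
  have hL0inv_d : ∀ i, L0⁻¹ i i = 1 := lo_inv_diag hL0lo hL0d
  have hU0inv_up : Up U0⁻¹ := hU0up.inv hU0det
  have s3 : ((MomC q p μ N 0 0).submatrix (emb N 0 k h0) (emb N m k hmk')).det
      = ((U0⁻¹).submatrix (emb N 0 k h0) (emb N m k hmk')).det := by
    rw [hM00, mul_submatrix_lo L0⁻¹ U0⁻¹ hL0inv_lo hmk' h0, Matrix.det_mul,
      det_lo_submatrix_one L0⁻¹ hL0inv_lo hL0inv_d h0, one_mul]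
  -- Jacobi (upper version)
  have hAB : U0.submatrix (emb N 0 (k+m) h0K) (emb N 0 (k+m) h0K) *
      (U0⁻¹).submatrix (emb N 0 (k+m) h0K) (emb N 0 (k+m) h0K) = 1 :=
    leading_block_inv_up U0 U0⁻¹ hU0inv_up (Matrix.mul_nonsing_inv U0 hU0det) h0K
  have hJ := jacobi' (rfl : k + m = k + m)
    (U0.submatrix (emb N 0 (k+m) h0K) (emb N 0 (k+m) h0K))
    ((U0⁻¹).submatrix (emb N 0 (k+m) h0K) (emb N 0 (k+m) h0K)) hAB
  have hBsub : (((U0⁻¹).submatrix (emb N 0 (k+m) h0K) (emb N 0 (k+m) h0K)).submatrix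
      (fun i : Fin k => (⟨(i : ℕ), by omega⟩ : Fin (k+m)))
      (fun j : Fin k => (⟨(j : ℕ) + m, by omega⟩ : Fin (k+m))))
      = (U0⁻¹).submatrix (emb N 0 k h0) (emb N m k hmk') := by
    ext i j; rfl
  have hAsub : ((U0.submatrix (emb N 0 (k+m) h0K) (emb N 0 (k+m) h0K)).submatrix
      (fun i : Fin m => (⟨(i : ℕ), by omega⟩ : Fin (k+m)))
      (fun j : Fin m => (⟨(j : ℕ) + k, by omega⟩ : Fin (k+m))))
      = U0.submatrix (fun i : Fin m => (⟨(i : ℕ), by omega⟩ : Fin N))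
          (fun j : Fin m => (⟨(j : ℕ) + k, by omega⟩ : Fin N)) := by
    ext i j; rfl
  rw [hBsub, hAsub, det_up_submatrix U0 hU0up h0K, dprod_eq] at hJ
  -- tau
  have hτ := tauA_eq hp U0 m k hm hkm
  -- combine
  rw [← s1, s2, s3, hJ, hτ]
  rw [show ((Equiv.Perm.sign (Fin.revPerm : Equiv.Perm (Fin m)) : ℤ) : ℝ) = eps m from rfl]
  set d : ℝ := (U0.submatrix (fun i : Fin m => (⟨(i : ℕ), by omega⟩ : Fin N))
    (fun j : Fin m => (⟨(j : ℕ) + k, by omega⟩ : Fin N))).det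
  linear_combination (-((-1 : ℝ) ^ (k * m) * d)) * eps_mul_self m

end Chr


open Chr

/-- Christoffel formulas for the entries of the bidiagonal factors:
`U_{b,n} = −τ^B_{b−1,n} τ^B_{b,n+1} / (τ^B_{b−1,n+1} τ^B_{b,n})` and
`L_{a,n+1} = −τ^A_{a−1,n+2} τ^A_{a,n} / (τ^A_{a−1,n+1} τ^A_{a,n+1})`. -/
theorem christoffel_formulas_bidiagonal_entries (p q N : ℕ) (hp : 0 < p) (hq : 0 < q)
    (μ : Fin q → Fin p → Measure ℝ)
    (hμ : ∀ (a : Fin q) (b : Fin p) (k : ℕ),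
      Integrable (fun x : ℝ => |x| ^ k) (μ a b))
    (L U : ℕ → ℕ → Matrix (Fin N) (Fin N) ℝ)
    (hfact : ∀ n m : ℕ, (n ≤ q ∧ m = 0) ∨ (n = 0 ∧ m ≤ p) →
      (∀ i j : Fin N, i < j → L n m i j = 0) ∧
      (∀ i : Fin N, L n m i i = 1) ∧
      (∀ i j : Fin N, j < i → U n m i j = 0) ∧
      IsUnit (U n m).det ∧
      MomC q p μ N n m = (L n m)⁻¹ * (U n m)⁻¹)
    (hτB : ∀ (b n : ℕ) (hb : b ≤ q) (hn : n + b ≤ N),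
      tauB (L 0 0 * Xmat q N 0) b n hb hn ≠ 0)
    (hτA : ∀ (a n : ℕ) (ha : a ≤ p) (hn : n + a < N),
      tauA ((Xmat p N 0)ᵀ * U 0 0) a n ha (le_of_lt hn) ≠ 0) :
    (∀ (b n : ℕ) (hb1 : 1 ≤ b) (hb : b ≤ q) (hn : n + b < N),
      ((U b 0)⁻¹ * U (b - 1) 0) ⟨n, by omega⟩ ⟨n, by omega⟩ =
        -(tauB (L 0 0 * Xmat q N 0) (b - 1) n (by omega) (by omega) *
            tauB (L 0 0 * Xmat q N 0) b (n + 1) hb (by omega)) /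
          (tauB (L 0 0 * Xmat q N 0) (b - 1) (n + 1) (by omega) (by omega) *
            tauB (L 0 0 * Xmat q N 0) b n hb (by omega))) ∧
    (∀ (a n : ℕ) (ha1 : 1 ≤ a) (ha : a ≤ p) (hn : n + a + 2 ≤ N),
      (L 0 (a - 1) * (L 0 a)⁻¹) ⟨n + 1, by omega⟩ ⟨n, by omega⟩ =
        -(tauA ((Xmat p N 0)ᵀ * U 0 0) (a - 1) (n + 2) (by omega) (by omega) *
            tauA ((Xmat p N 0)ᵀ * U 0 0) a n ha (by omega)) /
          (tauA ((Xmat p N 0)ᵀ * U 0 0) (a - 1) (n + 1) (by omega) (by omega) *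
            tauA ((Xmat p N 0)ᵀ * U 0 0) a (n + 1) ha (by omega))) := by
  obtain ⟨hL00lo, hL00d, hU00up, hU00det, hM00⟩ := hfact 0 0 (Or.inl ⟨by omega, rfl⟩)
  have hPmul : ∀ j : Fin N, (U 0 0)⁻¹ j j * (U 0 0) j j = 1 :=
    inv_diag_mul_self hU00up hU00det
  have hQmul : ∀ j : Fin N, (U 0 0) j j * (U 0 0)⁻¹ j j = 1 := fun j => by
    rw [mul_comm]; exact hPmul j
  constructor
  · -- B part
    intro b n hb1 hb hn
    obtain ⟨b', rfl⟩ : ∃ b', b = b' + 1 := ⟨b - 1, by omega⟩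
    obtain ⟨hL1lo, hL1d, hU1up, hU1det, hM1⟩ := hfact (b' + 1) 0 (Or.inl ⟨hb, rfl⟩)
    obtain ⟨hL2lo, hL2d, hU2up, hU2det, hM2⟩ := hfact b' 0 (Or.inl ⟨by omega, rfl⟩)
    have hnN : n < N := by omega
    -- tau determinants
    have hck1 : n + (b' + 1) ≤ N := by omega
    have hck2 : (n + 1) + (b' + 1) ≤ N := by omega
    have hck3 : n + b' ≤ N := by omega
    have hck4 : (n + 1) + b' ≤ N := by omega
    have hD1 := deltaB hq hp μ (L 0 0) (U 0 0) (L (b'+1) 0) (U (b'+1) 0)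
      (hL00lo) hL00d (hU00up) hU00det (hL1lo) hL1d (hU1up) hU1det hM00 (b'+1) hM1
      n hb hck1
    have hD2 := deltaB hq hp μ (L 0 0) (U 0 0) (L (b'+1) 0) (U (b'+1) 0)
      (hL00lo) hL00d (hU00up) hU00det (hL1lo) hL1d (hU1up) hU1det hM00 (b'+1) hM1
      (n+1) hb hck2
    have hD3 := deltaB hq hp μ (L 0 0) (U 0 0) (L b' 0) (U b' 0)
      (hL00lo) hL00d (hU00up) hU00det (hL2lo) hL2d (hU2up) hU2det hM00 b' hM2
      n (by omega) hck3
    have hD4 := deltaB hq hp μ (L 0 0) (U 0 0) (L b' 0) (U b' 0)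
      (hL00lo) hL00d (hU00up) hU00det (hL2lo) hL2d (hU2up) hU2det hM00 b' hM2
      (n+1) (by omega) hck4
    -- abbreviations
    set t1 : ℝ := tauB (L 0 0 * Xmat q N 0) b' n (by omega) hck3 with ht1def
    set t2 : ℝ := tauB (L 0 0 * Xmat q N 0) (b'+1) (n+1) hb hck2 with ht2def
    set t3 : ℝ := tauB (L 0 0 * Xmat q N 0) b' (n+1) (by omega) hck4 with ht3def
    set t4 : ℝ := tauB (L 0 0 * Xmat q N 0) (b'+1) n hb hck1 with ht4def
    set Pn : ℝ := dprod (U 0 0)⁻¹ n with hPndef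
    set Pn1 : ℝ := dprod (U 0 0)⁻¹ (n+1) with hPn1def
    set s1 : ℝ := (-1 : ℝ) ^ (n * (b'+1)) with hs1def
    set s2 : ℝ := (-1 : ℝ) ^ ((n+1) * (b'+1)) with hs2def
    set s3 : ℝ := (-1 : ℝ) ^ (n * b') with hs3def
    set s4 : ℝ := (-1 : ℝ) ^ ((n+1) * b') with hs4def
    -- recurrences and entry
    set x : ℝ := (U (b'+1) 0)⁻¹ ⟨n, hnN⟩ ⟨n, hnN⟩ with hxdef
    set y : ℝ := (U b' 0)⁻¹ ⟨n, hnN⟩ ⟨n, hnN⟩ with hydef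
    set u : ℝ := (U b' 0) ⟨n, hnN⟩ ⟨n, hnN⟩ with hudef
    have hR1 : dprod (U (b'+1) 0)⁻¹ (n+1) = dprod (U (b'+1) 0)⁻¹ n * x :=
      dprod_succ _ hnN
    have hR2 : dprod (U b' 0)⁻¹ (n+1) = dprod (U b' 0)⁻¹ n * y :=
      dprod_succ _ hnN
    have hu : y * u = 1 := inv_diag_mul_self hU2up hU2det ⟨n, hnN⟩
    have hE : ((U (b'+1) 0)⁻¹ * U b' 0) ⟨n, hnN⟩ ⟨n, hnN⟩ = x * u :=
      mul_diag_up (Up.inv hU1up hU1det) hU2up ⟨n, hnN⟩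
    -- nonzeroness
    have ht3ne : t3 ≠ 0 := hτB b' (n+1) (by omega) hck4
    have ht4ne : t4 ≠ 0 := hτB (b'+1) n hb hck1
    have hPnne : Pn ≠ 0 := dprod_ne_zero _ (U 0 0) hPmul
    have hPn1ne : Pn1 ≠ 0 := dprod_ne_zero _ (U 0 0) hPmul
    have hs1ne : s1 ≠ 0 := pow_ne_zero _ (by norm_num)
    have hs4ne : s4 ≠ 0 := pow_ne_zero _ (by norm_num)
    -- key identity
    have keyB : ((U (b'+1) 0)⁻¹ * U b' 0) ⟨n, hnN⟩ ⟨n, hnN⟩ * (s1 * t4 * Pn * (s4 * t3 * Pn1))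
        = (s2 * t2 * Pn1) * (s3 * t1 * Pn) := by
      calc ((U (b'+1) 0)⁻¹ * U b' 0) ⟨n, hnN⟩ ⟨n, hnN⟩ * (s1 * t4 * Pn * (s4 * t3 * Pn1))
          = (x * u) * ((s1 * t4 * Pn) * (s4 * t3 * Pn1)) := by rw [hE]
        _ = (x * u) * (dprod (U (b'+1) 0)⁻¹ n * dprod (U b' 0)⁻¹ (n+1)) := by
            rw [hD1, hD4]
        _ = (dprod (U (b'+1) 0)⁻¹ n * x) * ((dprod (U b' 0)⁻¹ n * y) * u) := by
            rw [hR2]; ring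
        _ = dprod (U (b'+1) 0)⁻¹ (n+1) * (dprod (U b' 0)⁻¹ n * (y * u)) := by
            rw [hR1]; ring
        _ = dprod (U (b'+1) 0)⁻¹ (n+1) * dprod (U b' 0)⁻¹ n := by rw [hu, mul_one]
        _ = (s2 * t2 * Pn1) * (s3 * t1 * Pn) := by rw [hD2, hD3]
    have hsignB : s2 * s3 = -(s1 * s4) := by
      rw [hs1def, hs2def, hs3def, hs4def, ← pow_add, ← pow_add,
        show (n+1) * (b'+1) + n * b' = (n * (b'+1) + (n+1) * b') + 1 by ring, pow_succ]
      ring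
    have hden : t3 * t4 ≠ 0 := mul_ne_zero ht3ne ht4ne
    have main : ((U (b'+1) 0)⁻¹ * U b' 0) ⟨n, hnN⟩ ⟨n, hnN⟩ = -(t1 * t2) / (t3 * t4) := by
      rw [eq_div_iff hden]
      have hCne : s1 * s4 * Pn * Pn1 ≠ 0 :=
        mul_ne_zero (mul_ne_zero (mul_ne_zero hs1ne hs4ne) hPnne) hPn1ne
      apply mul_right_cancel₀ hCne
      linear_combination keyB + (t1 * t2 * Pn * Pn1) * hsignB
    exact main
  · -- A part
    intro a n ha1 ha hn
    obtain ⟨a', rfl⟩ : ∃ a', a = a' + 1 := ⟨a - 1, by omega⟩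
    obtain ⟨hL1lo, hL1d, hU1up, hU1det, hM1⟩ := hfact 0 a' (Or.inr ⟨rfl, by omega⟩)
    obtain ⟨hL2lo, hL2d, hU2up, hU2det, hM2⟩ := hfact 0 (a'+1) (Or.inr ⟨rfl, ha⟩)
    have hnN : n < N := by omega
    have hn1N : n + 1 < N := by omega
    -- the entry as a product of diagonal entries
    have hALdet : IsUnit (L 0 a').det := Lo.isUnitDet hL1lo hL1d
    have hAL'det : IsUnit (L 0 (a'+1)).det := Lo.isUnitDet hL2lo hL2d
    have hT : L 0 a' * (L 0 (a'+1))⁻¹ = (L 0 a' * MomC q p μ N 0 (a'+1)) * U 0 (a'+1) := by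
      rw [hM2, ← Matrix.mul_assoc, Matrix.mul_assoc (L 0 a' * (L 0 (a'+1))⁻¹),
        Matrix.nonsing_inv_mul (U 0 (a'+1)) hU2det, Matrix.mul_one]
    have hAMom : L 0 a' * MomC q p μ N 0 a' = (U 0 a')⁻¹ := by
      rw [hM1, ← Matrix.mul_assoc, Matrix.mul_nonsing_inv (L 0 a') hALdet, Matrix.one_mul]
    have hshift : ∀ (s t : Fin N) (ht : (t : ℕ) + a' + 2 ≤ N),
        MomC q p μ N 0 (a'+1) s t
          = MomC q p μ N 0 a' s ⟨(t : ℕ) + 1, by omega⟩ := by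
      intro s t ht
      rw [momC_shift hq hp μ 0 (a'+1) s t s ⟨(t : ℕ) + a' + 1, by omega⟩
        (show (s : ℕ) = (s : ℕ) + 0 by omega)
        (show (t : ℕ) + a' + 1 = (t : ℕ) + (a' + 1) by omega),
        momC_shift hq hp μ 0 a' s ⟨(t : ℕ) + 1, by omega⟩ s ⟨(t : ℕ) + a' + 1, by omega⟩
        (show (s : ℕ) = (s : ℕ) + 0 by omega)
        (show (t : ℕ) + a' + 1 = (t : ℕ) + 1 + a' by omega)]
    have hVinvUp : Up (U 0 a')⁻¹ := Up.inv hU1up hU1det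
    have hAMa : ∀ (i : Fin N) (t : Fin N) (ht : (t : ℕ) + a' + 2 ≤ N),
        (L 0 a' * MomC q p μ N 0 (a'+1)) i t
          = (U 0 a')⁻¹ i ⟨(t : ℕ) + 1, by omega⟩ := by
      intro i t ht
      rw [Matrix.mul_apply]
      have : ∀ s : Fin N, L 0 a' i s * MomC q p μ N 0 (a'+1) s t
          = L 0 a' i s * MomC q p μ N 0 a' s ⟨(t : ℕ) + 1, by omega⟩ := fun s => by
        rw [hshift s t ht]
      rw [Finset.sum_congr rfl fun s _ => this s, ← Matrix.mul_apply, hAMom]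
    have hE2 : (L 0 a' * (L 0 (a'+1))⁻¹) ⟨n + 1, hn1N⟩ ⟨n, hnN⟩
        = (U 0 a')⁻¹ ⟨n + 1, hn1N⟩ ⟨n + 1, hn1N⟩ * (U 0 (a'+1)) ⟨n, hnN⟩ ⟨n, hnN⟩ := by
      rw [hT, Matrix.mul_apply, Finset.sum_eq_single (⟨n, hnN⟩ : Fin N)]
      · rw [hAMa ⟨n + 1, hn1N⟩ ⟨n, hnN⟩ (show n + a' + 2 ≤ N by omega)]
      · intro t _ htn
        rcases lt_or_gt_of_ne htn with hlt | hgt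
        · have htlt : (t : ℕ) < n := hlt
          rw [hAMa ⟨n + 1, hn1N⟩ t (by omega : (t : ℕ) + a' + 2 ≤ N),
            hVinvUp _ _ (by simp only [Fin.lt_def]; omega), zero_mul]
        · rw [hU2up _ _ (by simpa using hgt), mul_zero]
      · intro hmem; exact absurd (Finset.mem_univ _) hmem
    -- delta relations
    have hkm1 : (n+1) + a' ≤ N := by omega
    have hkm2 : (n+2) + a' ≤ N := by omega
    have hkm3 : n + (a'+1) ≤ N := by omega
    have hkm4 : (n+1) + (a'+1) ≤ N := by omega
    have hD1 := deltaA hq hp μ (L 0 0) (U 0 0) (L 0 a') (U 0 a')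
      hL00lo hL00d hU00up hU00det hL1lo hL1d hU1up hU1det hM00 a' hM1
      (n+1) (by omega) hkm1
    have hD2 := deltaA hq hp μ (L 0 0) (U 0 0) (L 0 a') (U 0 a')
      hL00lo hL00d hU00up hU00det hL1lo hL1d hU1up hU1det hM00 a' hM1
      (n+2) (by omega) hkm2
    have hD3 := deltaA hq hp μ (L 0 0) (U 0 0) (L 0 (a'+1)) (U 0 (a'+1))
      hL00lo hL00d hU00up hU00det hL2lo hL2d hU2up hU2det hM00 (a'+1) hM2
      n ha hkm3
    have hD4 := deltaA hq hp μ (L 0 0) (U 0 0) (L 0 (a'+1)) (U 0 (a'+1))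
      hL00lo hL00d hU00up hU00det hL2lo hL2d hU2up hU2det hM00 (a'+1) hM2
      (n+1) ha hkm4
    rw [show n + 1 + a' = n + a' + 1 by omega] at hD1
    rw [show n + 2 + a' = n + a' + 2 by omega] at hD2
    rw [show n + (a' + 1) = n + a' + 1 by omega] at hD3
    rw [show n + 1 + (a' + 1) = n + a' + 2 by omega] at hD4
    -- abbreviations
    set t1 : ℝ := tauA ((Xmat p N 0)ᵀ * U 0 0) (a'+1) n ha hkm3 with ht1def
    set t2 : ℝ := tauA ((Xmat p N 0)ᵀ * U 0 0) a' (n+2) (by omega) hkm2 with ht2def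
    set t3 : ℝ := tauA ((Xmat p N 0)ᵀ * U 0 0) a' (n+1) (by omega) hkm1 with ht3def
    set t4 : ℝ := tauA ((Xmat p N 0)ᵀ * U 0 0) (a'+1) (n+1) ha hkm4 with ht4def
    set Q1 : ℝ := dprod (U 0 0) (n + a' + 1) with hQ1def
    set Q2 : ℝ := dprod (U 0 0) (n + a' + 2) with hQ2def
    set s1 : ℝ := (-1 : ℝ) ^ ((n+1) * a') with hs1def
    set s2 : ℝ := (-1 : ℝ) ^ ((n+2) * a') with hs2def
    set s3 : ℝ := (-1 : ℝ) ^ (n * (a'+1)) with hs3def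
    set s4 : ℝ := (-1 : ℝ) ^ ((n+1) * (a'+1)) with hs4def
    set e1 : ℝ := eps a' with he1def
    set e2 : ℝ := eps (a'+1) with he2def
    set x : ℝ := (U 0 a')⁻¹ ⟨n + 1, hn1N⟩ ⟨n + 1, hn1N⟩ with hxdef
    set y : ℝ := (U 0 (a'+1))⁻¹ ⟨n, hnN⟩ ⟨n, hnN⟩ with hydef
    set u : ℝ := (U 0 (a'+1)) ⟨n, hnN⟩ ⟨n, hnN⟩ with hudef
    have hR1 : dprod (U 0 a')⁻¹ (n+2) = dprod (U 0 a')⁻¹ (n+1) * x :=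
      dprod_succ _ hn1N
    have hR2 : dprod (U 0 (a'+1))⁻¹ (n+1) = dprod (U 0 (a'+1))⁻¹ n * y :=
      dprod_succ _ hnN
    have hu : y * u = 1 := inv_diag_mul_self hU2up hU2det ⟨n, hnN⟩
    -- nonzeroness
    have ht3ne : t3 ≠ 0 := hτA a' (n+1) (by omega) (by omega)
    have ht4ne : t4 ≠ 0 := hτA (a'+1) (n+1) ha (by omega)
    have hQ1ne : Q1 ≠ 0 := dprod_ne_zero _ (U 0 0)⁻¹ hQmul
    have hQ2ne : Q2 ≠ 0 := dprod_ne_zero _ (U 0 0)⁻¹ hQmul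
    have hs1ne : s1 ≠ 0 := pow_ne_zero _ (by norm_num)
    have hs4ne : s4 ≠ 0 := pow_ne_zero _ (by norm_num)
    have he1ne : e1 ≠ 0 := eps_ne_zero a'
    have he2ne : e2 ≠ 0 := eps_ne_zero (a'+1)
    -- key identity
    have keyA : (L 0 a' * (L 0 (a'+1))⁻¹) ⟨n + 1, hn1N⟩ ⟨n, hnN⟩ *
        ((s1 * e1 * t3) * (s4 * e2 * t4))
        = (s2 * e1 * t2) * (s3 * e2 * t1) := by
      calc (L 0 a' * (L 0 (a'+1))⁻¹) ⟨n + 1, hn1N⟩ ⟨n, hnN⟩ *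
          ((s1 * e1 * t3) * (s4 * e2 * t4))
          = (x * u) * ((dprod (U 0 a')⁻¹ (n+1) * Q1) * (dprod (U 0 (a'+1))⁻¹ (n+1) * Q2)) := by
            rw [hE2, hD1, hD4]
        _ = (dprod (U 0 a')⁻¹ (n+1) * x) * ((dprod (U 0 (a'+1))⁻¹ n * y) * u) * (Q1 * Q2) := by
            rw [hR2]; ring
        _ = dprod (U 0 a')⁻¹ (n+2) * (dprod (U 0 (a'+1))⁻¹ n * (y * u)) * (Q1 * Q2) := by
            rw [hR1]; ring
        _ = (dprod (U 0 a')⁻¹ (n+2) * Q2) * (dprod (U 0 (a'+1))⁻¹ n * Q1) := by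
            rw [hu, mul_one]; ring
        _ = (s2 * e1 * t2) * (s3 * e2 * t1) := by rw [hD2, hD3]
    have hsignA : s1 * s4 = -(s2 * s3) := by
      rw [hs1def, hs2def, hs3def, hs4def, ← pow_add, ← pow_add,
        show (n+1) * a' + (n+1) * (a'+1) = ((n+2) * a' + n * (a'+1)) + 1 by ring, pow_succ]
      ring
    have hden : t3 * t4 ≠ 0 := mul_ne_zero ht3ne ht4ne
    have main : (L 0 a' * (L 0 (a'+1))⁻¹) ⟨n + 1, hn1N⟩ ⟨n, hnN⟩
        = -(t2 * t1) / (t3 * t4) := by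
      rw [eq_div_iff hden]
      have hCne : s1 * s4 * e1 * e2 ≠ 0 :=
        mul_ne_zero (mul_ne_zero (mul_ne_zero hs1ne hs4ne) he1ne) he2ne
      apply mul_right_cancel₀ hCne
      linear_combination keyA + (t2 * t1 * e1 * e2) * hsignA
    exact main
end
end
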